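/- arXiv:2308.13034 — 9 statements merged into one kernel-verified Lean document; each statement's English description precedes it below -/
import Mathlib

section
/- Let i and j be two nodes of the discrete Bass realization. For every ω in the cube [0,1]^{N×M}, the joint nonadoption indicator satisfies the correlation inequality ∫ G_i(ω) G_j(ω) dμ(ω) ≥ (∫ G_i(ω) dμ(ω)) · (∫ G_j(ω) dμ(ω)), where the integrals are over the cube [0,1]^{N×M} with the uniform probability measure μ. (This is the discrete-time form of the inequality [S_{i,j}](t) ≥ [S_i](t)·[S_j](t) for the Bass model: the probability that both i and j are nonadopters is at least the product of their individual nonadoption probabilities.) -/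
/-!
Lowering a uniform `ω n j` can only make an adoption test pass earlier, and since `q ≥ 0`
earlier adoptions only raise the hazards of the other nodes; hence every nonadoption
indicator `G_i` is a monotone function of `ω`. The uniform measure on the cube is a product
of probability measures on the linearly ordered line, so the claim is Harris' inequality:
monotone functions are positively correlated under a product measure. In one coordinate this
is Chebyshev's integral inequality, and it passes to products by conditioning on the first
factor.
-/

open MeasureTheory

/-- Discrete Bass realization: adoption state of node `j` after `n` time steps,
for the realization `ω : Fin N → Fin M → ℝ` of the uniform variables. -/
noncomputable def bassX (M N : ℕ) (dt : ℝ) (p : Fin M → ℝ) (q : Fin M → Fin M → ℝ)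
    (ω : Fin N → Fin M → ℝ) : ℕ → Fin M → Bool
  | 0, _ => false
  | n + 1, j =>
    if h : n < N then
      bassX M N dt p q ω n j ||
        (if ω ⟨n, h⟩ j ≤
            (p j + ∑ k, q k j * (if bassX M N dt p q ω n k = true then (1 : ℝ) else 0)) * dt
          then true else false)
    else
      bassX M N dt p q ω n j

/-- Nonadoption indicator of node `i` after `N` steps. -/
noncomputable def bassG (M N : ℕ) (dt : ℝ) (p : Fin M → ℝ) (q : Fin M → Fin M → ℝ)
    (i : Fin M) (ω : Fin N → Fin M → ℝ) : ℝ :=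
  if bassX M N dt p q ω N i = false then 1 else 0

/-- Uniform probability measure on the cube `[0,1]^{N×M}`. -/
noncomputable def cubeMeasure (N M : ℕ) : Measure (Fin N → Fin M → ℝ) :=
  Measure.pi fun _ => Measure.pi fun _ => volume.restrict (Set.Icc (0 : ℝ) 1)

def PositivelyAssociated {α : Type*} [MeasurableSpace α] [Preorder α] (μ : Measure α) : Prop :=
  ∀ f g : α → ℝ, Measurable f → Measurable g → Monotone f → Monotone g →
    (∀ x, f x ∈ unitInterval) → (∀ x, g x ∈ unitInterval) →
    (∫ x, f x ∂μ) * (∫ x, g x ∂μ) ≤ ∫ x, f x * g x ∂μ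

section UnitInterval

variable {α : Type*} [MeasurableSpace α] {μ : Measure α} {f : α → ℝ}

lemma integrable_of_mem_unitInterval [IsFiniteMeasure μ] (hf : Measurable f)
    (hf01 : ∀ x, f x ∈ unitInterval) : Integrable f μ :=
  .of_bound hf.aestronglyMeasurable 1 <| .of_forall fun x => by
    rw [Real.norm_eq_abs, abs_le]
    exact ⟨by linarith [(hf01 x).1], (hf01 x).2⟩

lemma integral_mem_unitInterval [IsProbabilityMeasure μ] (hf : Measurable f)
    (hf01 : ∀ x, f x ∈ unitInterval) : ∫ x, f x ∂μ ∈ unitInterval := by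
  refine ⟨integral_nonneg fun x => (hf01 x).1, ?_⟩
  calc ∫ x, f x ∂μ ≤ ∫ _, (1 : ℝ) ∂μ :=
        integral_mono (integrable_of_mem_unitInterval hf hf01) (integrable_const 1)
          fun x => (hf01 x).2
    _ = 1 := by simp

end UnitInterval

/-- Chebyshev's integral inequality: integrate the rearrangement inequality
`f x * g y + f y * g x ≤ f x * g x + f y * g y` over `μ ⊗ μ`. -/
lemma Monovary.integral_mul_integral_le_integral_mul {α : Type*} [MeasurableSpace α]
    {μ : Measure α} [IsProbabilityMeasure μ] {f g : α → ℝ} (hfg : Monovary f g)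
    (hf : Integrable f μ) (hg : Integrable g μ) (hfg_int : Integrable (fun x => f x * g x) μ) :
    (∫ x, f x ∂μ) * (∫ x, g x ∂μ) ≤ ∫ x, f x * g x ∂μ := by
  have hcross : Integrable (fun z : α × α => f z.1 * g z.2) (μ.prod μ) := hf.mul_prod hg
  have hcross' : Integrable (fun z : α × α => g z.1 * f z.2) (μ.prod μ) := hg.mul_prod hf
  have hdiag : Integrable (fun z : α × α => f z.1 * g z.1) (μ.prod μ) := hfg_int.comp_fst μ
  have hdiag' : Integrable (fun z : α × α => f z.2 * g z.2) (μ.prod μ) := hfg_int.comp_snd μ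
  suffices 2 * ((∫ x, f x ∂μ) * ∫ x, g x ∂μ) ≤ 2 * ∫ x, f x * g x ∂μ by linarith
  calc 2 * ((∫ x, f x ∂μ) * ∫ x, g x ∂μ)
      = ∫ z, f z.1 * g z.2 + g z.1 * f z.2 ∂μ.prod μ := by
        rw [integral_add hcross hcross', integral_prod_mul f g, integral_prod_mul g f]
        ring
    _ ≤ ∫ z, f z.1 * g z.1 + f z.2 * g z.2 ∂μ.prod μ :=
        integral_mono (hcross.add hcross') (hdiag.add hdiag') fun z => by
          linarith [hfg.mul_add_mul_le_mul_add_mul z.1 z.2]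
    _ = 2 * ∫ x, f x * g x ∂μ := by
        rw [integral_add hdiag hdiag', integral_fun_fst (fun x => f x * g x),
          integral_fun_snd (fun x => f x * g x)]
        simp only [probReal_univ, one_smul]
        ring

lemma PositivelyAssociated.of_linearOrder {α : Type*} [MeasurableSpace α] [LinearOrder α]
    (μ : Measure α) [IsProbabilityMeasure μ] : PositivelyAssociated μ :=
  fun _ _ hf hg hfm hgm hf01 hg01 =>
    (hfm.monovary hgm).integral_mul_integral_le_integral_mul
      (integrable_of_mem_unitInterval hf hf01) (integrable_of_mem_unitInterval hg hg01)
      (integrable_of_mem_unitInterval (hf.mul hg) fun x => unitInterval.mul_mem (hf01 x) (hg01 x))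

section IntegralProdRight

variable {α β : Type*} [MeasurableSpace α] [MeasurableSpace β] {ν : Measure β}
  [IsProbabilityMeasure ν] {u : α × β → ℝ}

lemma integral_prod_right_mem_unitInterval (hu : Measurable u) (hu01 : ∀ z, u z ∈ unitInterval)
    (x : α) : ∫ y, u (x, y) ∂ν ∈ unitInterval :=
  integral_mem_unitInterval (hu.comp measurable_prodMk_left) fun _ => hu01 _

lemma monotone_integral_prod_right [Preorder α] [Preorder β] (hu : Measurable u)
    (hu01 : ∀ z, u z ∈ unitInterval) (hum : Monotone u) :
    Monotone fun x => ∫ y, u (x, y) ∂ν := fun _ _ hab =>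
  integral_mono (integrable_of_mem_unitInterval (hu.comp measurable_prodMk_left) fun _ => hu01 _)
    (integrable_of_mem_unitInterval (hu.comp measurable_prodMk_left) fun _ => hu01 _)
    fun _ => hum (Prod.mk_le_mk.2 ⟨hab, le_rfl⟩)

end IntegralProdRight

namespace PositivelyAssociated

variable {α β : Type*} [MeasurableSpace α] [Preorder α] [MeasurableSpace β] [Preorder β]

lemma map {ν : Measure β} (hν : PositivelyAssociated ν) {e : β → α} (he : Measurable e)
    (he_mono : Monotone e) : PositivelyAssociated (ν.map e) := by
  intro f g hf hg hfm hgm hf01 hg01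
  rw [integral_map he.aemeasurable hf.aestronglyMeasurable,
    integral_map he.aemeasurable hg.aestronglyMeasurable,
    integral_map (f := fun x => f x * g x) he.aemeasurable (hf.mul hg).aestronglyMeasurable]
  exact hν _ _ (hf.comp he) (hg.comp he) (hfm.comp he_mono) (hgm.comp he_mono)
    (fun _ => hf01 _) (fun _ => hg01 _)

/-- Harris' inequality for products: condition on the first coordinate, apply the
inequality in the second one, then in the first one to the two conditional expectations,
which are again monotone. -/
lemma prod {μ : Measure α} {ν : Measure β} [IsProbabilityMeasure μ] [IsProbabilityMeasure ν]
    (hμ : PositivelyAssociated μ) (hν : PositivelyAssociated ν) :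
    PositivelyAssociated (μ.prod ν) := by
  intro f g hf hg hfm hgm hf01 hg01
  have hfg01 : ∀ z, f z * g z ∈ unitInterval := fun z => unitInterval.mul_mem (hf01 z) (hg01 z)
  have hF := hf.stronglyMeasurable.integral_prod_right' (ν := ν) |>.measurable
  have hG := hg.stronglyMeasurable.integral_prod_right' (ν := ν) |>.measurable
  have hfg : Measurable fun z => f z * g z := hf.mul hg
  have hFG := hfg.stronglyMeasurable.integral_prod_right' (ν := ν) |>.measurable
  have hF01 := integral_prod_right_mem_unitInterval (ν := ν) hf hf01
  have hG01 := integral_prod_right_mem_unitInterval (ν := ν) hg hg01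
  calc (∫ z, f z ∂μ.prod ν) * ∫ z, g z ∂μ.prod ν
      = (∫ x, ∫ y, f (x, y) ∂ν ∂μ) * ∫ x, ∫ y, g (x, y) ∂ν ∂μ := by
        rw [integral_prod f (integrable_of_mem_unitInterval hf hf01),
          integral_prod g (integrable_of_mem_unitInterval hg hg01)]
    _ ≤ ∫ x, (∫ y, f (x, y) ∂ν) * ∫ y, g (x, y) ∂ν ∂μ :=
        hμ _ _ hF hG (monotone_integral_prod_right hf hf01 hfm)
          (monotone_integral_prod_right hg hg01 hgm) hF01 hG01
    _ ≤ ∫ x, ∫ y, f (x, y) * g (x, y) ∂ν ∂μ :=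
        integral_mono
          (integrable_of_mem_unitInterval (hF.mul hG) fun x =>
            unitInterval.mul_mem (hF01 x) (hG01 x))
          (integrable_of_mem_unitInterval hFG (integral_prod_right_mem_unitInterval hfg hfg01))
          fun x => hν _ _ (hf.comp measurable_prodMk_left) (hg.comp measurable_prodMk_left)
            (fun _ _ hab => hfm (Prod.mk_le_mk.2 ⟨le_rfl, hab⟩))
            (fun _ _ hab => hgm (Prod.mk_le_mk.2 ⟨le_rfl, hab⟩))
            (fun _ => hf01 _) (fun _ => hg01 _)
    _ = ∫ z, f z * g z ∂μ.prod ν :=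
        (integral_prod _ (integrable_of_mem_unitInterval hfg hfg01)).symm

end PositivelyAssociated

lemma positivelyAssociated_pi {n : ℕ} {α : Fin n → Type*} [∀ i, MeasurableSpace (α i)]
    [∀ i, Preorder (α i)] (μ : ∀ i, Measure (α i)) [∀ i, IsProbabilityMeasure (μ i)]
    (hμ : ∀ i, PositivelyAssociated (μ i)) : PositivelyAssociated (Measure.pi μ) := by
  induction n with
  | zero =>
    intro f g _ _ _ _ _ _
    simp [integral_unique]
  | succ n ih =>
    have hprod := (hμ 0).prod (ih (fun j => μ (Fin.succAbove 0 j)) fun j => hμ _)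
    rw [← (measurePreserving_piFinSuccAbove μ 0).symm.map_eq]
    refine hprod.map (MeasurableEquiv.measurable _) ?_
    intro x y hxy
    change Fin.insertNth 0 x.1 x.2 ≤ Fin.insertNth 0 y.1 y.2
    rw [Fin.insertNth_le_iff]
    simp only [Fin.insertNth_apply_same, Fin.insertNth_apply_succAbove]
    exact hxy

instance : IsProbabilityMeasure (volume.restrict (Set.Icc (0 : ℝ) 1)) :=
  ⟨by simp [Real.volume_Icc]⟩

lemma positivelyAssociated_cubeMeasure (N M : ℕ) : PositivelyAssociated (cubeMeasure N M) :=
  positivelyAssociated_pi _ fun _ =>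
    positivelyAssociated_pi _ fun _ => .of_linearOrder _

noncomputable def bassHazard (M N : ℕ) (dt : ℝ) (p : Fin M → ℝ) (q : Fin M → Fin M → ℝ)
    (ω : Fin N → Fin M → ℝ) (n : ℕ) (j : Fin M) : ℝ :=
  (p j + ∑ k, q k j * (if bassX M N dt p q ω n k = true then (1 : ℝ) else 0)) * dt

section Bass

variable {M N : ℕ} {dt : ℝ} {p : Fin M → ℝ} {q : Fin M → Fin M → ℝ}

lemma bassX_succ_eq_true_iff {n : ℕ} (hn : n < N) (ω : Fin N → Fin M → ℝ) (j : Fin M) :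
    bassX M N dt p q ω (n + 1) j = true ↔
      bassX M N dt p q ω n j = true ∨ ω ⟨n, hn⟩ j ≤ bassHazard M N dt p q ω n j := by
  simp [bassX, hn, bassHazard]

lemma bassX_succ_of_le {n : ℕ} (hn : N ≤ n) (ω : Fin N → Fin M → ℝ) (j : Fin M) :
    bassX M N dt p q ω (n + 1) j = bassX M N dt p q ω n j := by
  simp [bassX, not_lt.2 hn]

lemma bassHazard_le_bassHazard (hdt : 0 ≤ dt) (hq : ∀ k j, 0 ≤ q k j)
    {ω ω' : Fin N → Fin M → ℝ} {n : ℕ}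
    (h : ∀ k, bassX M N dt p q ω' n k = true → bassX M N dt p q ω n k = true) (j : Fin M) :
    bassHazard M N dt p q ω' n j ≤ bassHazard M N dt p q ω n j := by
  unfold bassHazard
  gcongr with k
  · exact hq k j
  · split_ifs with h' <;> simp_all

lemma bassX_eq_true_of_le (hdt : 0 ≤ dt) (hq : ∀ k j, 0 ≤ q k j)
    {ω ω' : Fin N → Fin M → ℝ} (hω : ω ≤ ω') (n : ℕ) (j : Fin M)
    (h : bassX M N dt p q ω' n j = true) : bassX M N dt p q ω n j = true := by
  induction n generalizing j with
  | zero => simp [bassX] at h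
  | succ n ih =>
    by_cases hn : n < N
    · rw [bassX_succ_eq_true_iff hn] at h ⊢
      refine h.imp (ih j) fun h' => (hω _ _).trans (h'.trans ?_)
      exact bassHazard_le_bassHazard hdt hq ih j
    · rw [bassX_succ_of_le (not_lt.1 hn)] at h ⊢
      exact ih j h

lemma measurableSet_bassX (n : ℕ) (j : Fin M) :
    MeasurableSet {ω : Fin N → Fin M → ℝ | bassX M N dt p q ω n j = true} := by
  induction n generalizing j with
  | zero => simp [bassX]
  | succ n ih =>
    by_cases hn : n < N
    · simp_rw [bassX_succ_eq_true_iff hn, Set.ofPred_or]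
      refine (ih j).union (measurableSet_le (by fun_prop) ?_)
      unfold bassHazard
      refine (Measurable.const_add ?_ _).mul_const _
      exact Finset.measurable_sum _ fun k _ =>
        (Measurable.ite (ih k) measurable_const measurable_const).const_mul _
    · simp_rw [bassX_succ_of_le (not_lt.1 hn)]
      exact ih j

lemma measurable_bassG (i : Fin M) : Measurable (bassG M N dt p q i) := by
  refine Measurable.ite ?_ measurable_const measurable_const
  simpa only [Set.compl_ofPred, Bool.not_eq_true] using (measurableSet_bassX N i).compl

lemma monotone_bassG (hdt : 0 ≤ dt) (hq : ∀ k j, 0 ≤ q k j) (i : Fin M) :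
    Monotone (bassG M N dt p q i) := by
  intro ω ω' hω
  unfold bassG
  by_cases h : bassX M N dt p q ω' N i = true
  · simp [h, bassX_eq_true_of_le hdt hq hω N i h]
  · simp only [Bool.not_eq_true] at h
    simp only [h, if_true]
    split_ifs <;> norm_num

lemma bassG_mem_unitInterval (i : Fin M) (ω : Fin N → Fin M → ℝ) :
    bassG M N dt p q i ω ∈ unitInterval := by
  unfold bassG
  split_ifs <;> simp

end Bass

theorem bass_nonadoption_product_inequality_general
    (M N : ℕ) (dt : ℝ) (hdt : 0 < dt)
    (p : Fin M → ℝ)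
    (q : Fin M → Fin M → ℝ) (hq : ∀ k j, 0 ≤ q k j)
    (i j : Fin M) :
    ∫ ω, bassG M N dt p q i ω * bassG M N dt p q j ω ∂(cubeMeasure N M) ≥
      (∫ ω, bassG M N dt p q i ω ∂(cubeMeasure N M)) *
        (∫ ω, bassG M N dt p q j ω ∂(cubeMeasure N M)) :=
  positivelyAssociated_cubeMeasure N M _ _ (measurable_bassG i) (measurable_bassG j)
    (monotone_bassG hdt.le hq i) (monotone_bassG hdt.le hq j)
    (bassG_mem_unitInterval i) (bassG_mem_unitInterval j)

/-- The probability that both `i` and `j` are nonadopters is at least the product of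
their individual nonadoption probabilities: `[S_{i,j}] ≥ [S_i]·[S_j]` in discrete time. -/
theorem bass_nonadoption_product_inequality
    (M N : ℕ) (hM : 1 ≤ M) (hN : 1 ≤ N) (dt : ℝ) (hdt : 0 < dt)
    (p : Fin M → ℝ) (hp : ∀ j, 0 ≤ p j)
    (q : Fin M → Fin M → ℝ) (hq : ∀ k j, 0 ≤ q k j) (hqdiag : ∀ j, q j j = 0)
    (i j : Fin M) :
    ∫ ω, bassG M N dt p q i ω * bassG M N dt p q j ω ∂(cubeMeasure N M) ≥
      (∫ ω, bassG M N dt p q i ω ∂(cubeMeasure N M)) *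
        (∫ ω, bassG M N dt p q j ω ∂(cubeMeasure N M)) :=
  bass_nonadoption_product_inequality_general M N dt hdt p q hq i j
end

section
/- Suppose there is no node of the network which is influential both to node i and to node j (i.e., no k ∈ Fin M such that k is influential to i and k is influential to j). Then the discrete Bass realization satisfies the exact product formula ∫ G_i(ω) G_j(ω) dμ(ω) = (∫ G_i(ω) dμ(ω)) · (∫ G_j(ω) dμ(ω)), where the integrals are over the cube [0,1]^{N×M} with the uniform probability measure μ. (This is the discrete-time form of the equality [S_{i,j}](t) = [S_i](t)·[S_j](t) when i and j have no common influential node.) -/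
/-!
The adoption state of a node is computed from the uniform variables of the nodes influential to
it only: a node whose state changes the threshold of `m` has an edge of positive weight into `m`.
When no node is influential to both `i` and `j`, the nonadoption indicators of `i` and `j` are
therefore functions of two disjoint sets of columns of the cube. Splitting the cube as the product
of these two sets of columns, the expectation of their product factorizes by Fubini.
-/

open MeasureTheory

/-- `k` is influential to `i`: `k = i`, or there is a finite directed path of
positive-weight edges from `k` to `i`. -/
def influential (M : ℕ) (q : Fin M → Fin M → ℝ) (k i : Fin M) : Prop :=
  Relation.ReflTransGen (fun a b => 0 < q a b) k i

section Factorization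

variable {X Y Z : Type*} [MeasurableSpace X] [MeasurableSpace Y] [MeasurableSpace Z]
  {μ : Measure X} {ν : Measure Y} {ρ : Measure Z} [IsProbabilityMeasure ν] [IsProbabilityMeasure ρ]

theorem MeasureTheory.MeasurePreserving.integral_mul_eq_mul_integral_of_factors {e : X ≃ᵐ Y × Z}
    (he : MeasurePreserving e μ (ν.prod ρ)) {f g : X → ℝ}
    (hf : ∀ x x', (e x).1 = (e x').1 → f x = f x')
    (hg : ∀ x x', (e x).2 = (e x').2 → g x = g x') :
    ∫ x, f x * g x ∂μ = (∫ x, f x ∂μ) * ∫ x, g x ∂μ := by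
  obtain ⟨w⟩ := nonempty_of_isProbabilityMeasure (ν.prod ρ)
  set F : Y → ℝ := fun y => f (e.symm (y, w.2))
  set G : Z → ℝ := fun z => g (e.symm (w.1, z))
  have hfF : ∀ x, f x = F (e x).1 := fun x => hf _ _ (by simp)
  have hgG : ∀ x, g x = G (e x).2 := fun x => hg _ _ (by simp)
  have hprod : ∀ (F : Y → ℝ) (G : Z → ℝ),
      ∫ x, F (e x).1 * G (e x).2 ∂μ = (∫ y, F y ∂ν) * ∫ z, G z ∂ρ := fun F G => by
    rw [he.integral_comp' (fun w => F w.1 * G w.2), integral_prod_mul]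
  have hfst : ∫ x, f x ∂μ = ∫ y, F y ∂ν := by
    simpa [← hfF] using hprod F 1
  have hsnd : ∫ x, g x ∂μ = ∫ z, G z ∂ρ := by
    simpa [← hgG] using hprod 1 G
  rw [hfst, hsnd, ← hprod]
  simp only [← hfF, ← hgG]

end Factorization

theorem integral_mul_eq_mul_integral_of_dependsOn_columns {κ ι α : Type*} [Fintype κ] [Fintype ι]
    [MeasurableSpace α] {μ : κ → ι → Measure α} [∀ n m, IsProbabilityMeasure (μ n m)]
    (s : Set ι) {f g : (κ → ι → α) → ℝ}
    (hf : ∀ x y, (∀ n, ∀ m ∈ s, x n m = y n m) → f x = f y)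
    (hg : ∀ x y, (∀ n, ∀ m ∉ s, x n m = y n m) → g x = g y) :
    ∫ x, f x * g x ∂(Measure.pi fun n => Measure.pi (μ n)) =
      (∫ x, f x ∂(Measure.pi fun n => Measure.pi (μ n))) *
        ∫ x, g x ∂(Measure.pi fun n => Measure.pi (μ n)) := by
  classical
  let e : (κ → ι → α) ≃ᵐ (κ → s → α) × (κ → ↥sᶜ → α) :=
    (MeasurableEquiv.piCongrRight fun _ =>
      MeasurableEquiv.piEquivPiSubtypeProd (fun _ : ι => α) (· ∈ s)).trans
    (MeasurableEquiv.arrowProdEquivProdArrow _ _ _)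
  have he : MeasurePreserving e (Measure.pi fun n => Measure.pi (μ n))
      ((Measure.pi fun n => Measure.pi fun m : s => μ n m).prod
        (Measure.pi fun n => Measure.pi fun m : ↥sᶜ => μ n m)) :=
    (measurePreserving_arrowProdEquivProdArrow _ _ _ _ _).comp
      (measurePreserving_pi _ _ fun n => measurePreserving_piEquivPiSubtypeProd (μ n) (· ∈ s))
  refine he.integral_mul_eq_mul_integral_of_factors (fun x y h => hf x y ?_)
    (fun x y h => hg x y ?_)
  · exact fun n m hm => congrFun (congrFun h n) ⟨m, hm⟩
  · exact fun n m hm => congrFun (congrFun h n) ⟨m, hm⟩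

section Bass

variable {M N : ℕ} {dt : ℝ} {p : Fin M → ℝ} {q : Fin M → Fin M → ℝ}

theorem bassX_eq_of_eqOn_influential (hq : ∀ k j, 0 ≤ q k j) {i : Fin M}
    {ω ω' : Fin N → Fin M → ℝ} (h : ∀ n m, influential M q m i → ω n m = ω' n m) (n : ℕ) :
    ∀ m, influential M q m i → bassX M N dt p q ω n m = bassX M N dt p q ω' n m := by
  induction n with
  | zero => intro m _; rfl
  | succ n ih =>
    intro m hm
    have hpressure : (∑ k, q k m * (if bassX M N dt p q ω n k = true then (1 : ℝ) else 0)) =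
        ∑ k, q k m * (if bassX M N dt p q ω' n k = true then (1 : ℝ) else 0) := by
      refine Finset.sum_congr rfl fun k _ => ?_
      rcases (hq k m).eq_or_lt with hzero | hpos
      · simp [← hzero]
      · rw [ih k (Relation.ReflTransGen.head hpos hm)]
    by_cases hn : n < N
    · simp only [bassX, dif_pos hn, ih m hm, h ⟨n, hn⟩ m hm, hpressure]
    · simp only [bassX, dif_neg hn, ih m hm]

theorem bassG_eq_of_eqOn_influential (hq : ∀ k j, 0 ≤ q k j) {i : Fin M}
    {ω ω' : Fin N → Fin M → ℝ} (h : ∀ n m, influential M q m i → ω n m = ω' n m) :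
    bassG M N dt p q i ω = bassG M N dt p q i ω' := by
  simp only [bassG, bassX_eq_of_eqOn_influential hq h N i Relation.ReflTransGen.refl]

end Bass

instance inst_s1 : IsProbabilityMeasure (volume.restrict (Set.Icc (0 : ℝ) 1)) :=
  ⟨by simp⟩

theorem bass_nonadoption_product_equality_general
    (M N : ℕ) (dt : ℝ)
    (p : Fin M → ℝ)
    (q : Fin M → Fin M → ℝ) (hq : ∀ k j, 0 ≤ q k j)
    (i j : Fin M)
    (hno_common : ¬ ∃ k : Fin M, influential M q k i ∧ influential M q k j) :
    ∫ ω, bassG M N dt p q i ω * bassG M N dt p q j ω ∂(cubeMeasure N M) =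
      (∫ ω, bassG M N dt p q i ω ∂(cubeMeasure N M)) *
        (∫ ω, bassG M N dt p q j ω ∂(cubeMeasure N M)) :=
  integral_mul_eq_mul_integral_of_dependsOn_columns {m | influential M q m i}
    (fun _ _ h => bassG_eq_of_eqOn_influential hq h)
    (fun _ _ h => bassG_eq_of_eqOn_influential hq fun n m hm =>
      h n m fun hmi => hno_common ⟨m, hmi, hm⟩)

/-- If no node is influential both to `i` and to `j`, then the joint nonadoption
probability factorizes exactly: `[S_{i,j}] = [S_i]·[S_j]` in discrete time. -/
theorem bass_nonadoption_product_equality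
    (M N : ℕ) (hM : 1 ≤ M) (hN : 1 ≤ N) (dt : ℝ) (hdt : 0 < dt)
    (p : Fin M → ℝ) (hp : ∀ j, 0 ≤ p j)
    (q : Fin M → Fin M → ℝ) (hq : ∀ k j, 0 ≤ q k j) (hqdiag : ∀ j, q j j = 0)
    (i j : Fin M)
    (hno_common : ¬ ∃ k : Fin M, influential M q k i ∧ influential M q k j) :
    ∫ ω, bassG M N dt p q i ω * bassG M N dt p q j ω ∂(cubeMeasure N M) =
      (∫ ω, bassG M N dt p q i ω ∂(cubeMeasure N M)) *
        (∫ ω, bassG M N dt p q j ω ∂(cubeMeasure N M)) :=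
  bass_nonadoption_product_equality_general M N dt p q hq i j hno_common
end

section
/- The discrete Bass realization is pathwise antitone in the uniform variables: if ω, ω' : Fin N → Fin M → ℝ satisfy ω_{n,j} ≤ ω'_{n,j} for all n and j, then for every step n ≤ N and every node j, X(ω') n j = true implies X(ω) n j = true. Consequently, each nonadoption indicator G_i is non-decreasing in every coordinate ω_{n,j}. -/
open MeasureTheory

/-- The discrete Bass realization is pathwise antitone in the uniform variables:
increasing the `ω` coordinates can only delay adoption. Consequently each
nonadoption indicator `G_i` is non-decreasing in every coordinate. -/
theorem bass_pathwise_antitone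
    (M N : ℕ) (hM : 1 ≤ M) (hN : 1 ≤ N) (dt : ℝ) (hdt : 0 < dt)
    (p : Fin M → ℝ) (hp : ∀ j, 0 ≤ p j)
    (q : Fin M → Fin M → ℝ) (hq : ∀ k j, 0 ≤ q k j) (hqdiag : ∀ j, q j j = 0)
    (ω ω' : Fin N → Fin M → ℝ) (hωω' : ∀ n j, ω n j ≤ ω' n j) :
    (∀ n, n ≤ N → ∀ j : Fin M,
        bassX M N dt p q ω' n j = true → bassX M N dt p q ω n j = true) ∧
      (∀ i : Fin M, bassG M N dt p q i ω ≤ bassG M N dt p q i ω') := by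
  have key : ∀ n, ∀ j : Fin M,
      bassX M N dt p q ω' n j = true → bassX M N dt p q ω n j = true := by
    intro n
    induction n with
    | zero => intro j h; simp [bassX] at h
    | succ n ih =>
      intro j h
      by_cases hn : n < N
      · rw [bassX, dif_pos hn] at h ⊢
        rcases Bool.or_eq_true_iff.mp h with h | h
        · exact Bool.or_eq_true_iff.mpr (Or.inl (ih j h))
        · refine Bool.or_eq_true_iff.mpr (Or.inr ?_)
          have hle' : ω' ⟨n, hn⟩ j ≤
              (p j + ∑ k, q k j *
                (if bassX M N dt p q ω' n k = true then (1 : ℝ) else 0)) * dt := by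
            by_contra hc
            rw [if_neg hc] at h
            exact Bool.false_ne_true h
          have hsum : (p j + ∑ k, q k j *
              (if bassX M N dt p q ω' n k = true then (1 : ℝ) else 0)) * dt ≤
              (p j + ∑ k, q k j *
              (if bassX M N dt p q ω n k = true then (1 : ℝ) else 0)) * dt := by
            apply mul_le_mul_of_nonneg_right _ hdt.le
            apply add_le_add_right
            apply Finset.sum_le_sum
            intro k _
            apply mul_le_mul_of_nonneg_left _ (hq k j)
            by_cases hk : bassX M N dt p q ω' n k = true
            · simp [hk, ih k hk]
            · rw [if_neg hk]
              split <;> norm_num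
          rw [if_pos (le_trans (hωω' ⟨n, hn⟩ j) (le_trans hle' hsum))]
      · rw [bassX, dif_neg hn] at h ⊢
        exact ih j h
  refine ⟨fun n _ j => key n j, fun i => ?_⟩
  unfold bassG
  by_cases h' : bassX M N dt p q ω' N i = false
  · rw [if_pos h']
    split <;> norm_num
  · have h1 : bassX M N dt p q ω' N i = true := by
      revert h'; cases bassX M N dt p q ω' N i <;> simp
    have h2 := key N i h1
    simp [h1, h2]
end

section
/- Locality of the discrete Bass realization: let k and i be nodes such that k is not influential to i (that is, k ≠ i and there is no finite directed path along edges of positive weight from k to i). If ω, ω' : Fin N → Fin M → ℝ agree in all coordinates except possibly those of node k (i.e., ω_{n,m} = ω'_{n,m} whenever m ≠ k), then X(ω) n i = X(ω') n i for every step n ≤ N; in particular G_i(ω) = G_i(ω'). -/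
open MeasureTheory

section Locality

variable {M N : ℕ} {dt : ℝ} {p : Fin M → ℝ} {q : Fin M → Fin M → ℝ} {ω ω' : Fin N → Fin M → ℝ}

theorem bassX_succ_congr {n : ℕ} {m : Fin M}
    (hω : ∀ h : n < N, ω ⟨n, h⟩ m = ω' ⟨n, h⟩ m)
    (hself : bassX M N dt p q ω n m = bassX M N dt p q ω' n m)
    (hin : ∀ j, q j m ≠ 0 → bassX M N dt p q ω n j = bassX M N dt p q ω' n j) :
    bassX M N dt p q ω (n + 1) m = bassX M N dt p q ω' (n + 1) m := by
  have hpressure : ∑ j, q j m * (if bassX M N dt p q ω n j = true then (1 : ℝ) else 0)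
      = ∑ j, q j m * (if bassX M N dt p q ω' n j = true then (1 : ℝ) else 0) := by
    refine Finset.sum_congr rfl fun j _ => ?_
    by_cases hqj : q j m = 0
    · simp only [hqj, zero_mul]
    · rw [hin j hqj]
  by_cases h : n < N
  · simp only [bassX, dif_pos h, hself, hpressure, hω h]
  · simp only [bassX, dif_neg h, hself]

theorem ne_of_not_influential {k m : Fin M} (h : ¬ influential M q k m) : m ≠ k := by
  rintro rfl
  exact h Relation.ReflTransGen.refl

/-- A node feeding a non-influenced node through a positive edge is itself non-influenced, so
the induction on `n` can be run over all non-influenced nodes at once. -/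
theorem bassX_eq_of_not_influential (hq : ∀ k j, 0 ≤ q k j) {k : Fin M}
    (hagree : ∀ n (m : Fin M), m ≠ k → ω n m = ω' n m) (n : ℕ) :
    ∀ m, ¬ influential M q k m → bassX M N dt p q ω n m = bassX M N dt p q ω' n m := by
  induction n with
  | zero => exact fun _ _ => rfl
  | succ n ih =>
    intro m hm
    refine bassX_succ_congr (fun h => hagree _ m (ne_of_not_influential hm)) (ih m hm)
      fun j hqj => ih j fun hkj => hm (hkj.tail ((hq j m).lt_of_ne' hqj))

end Locality

theorem bass_locality_general
    (M N : ℕ) (dt : ℝ)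
    (p : Fin M → ℝ)
    (q : Fin M → Fin M → ℝ) (hq : ∀ k j, 0 ≤ q k j)
    (k i : Fin M) (hki : ¬ influential M q k i)
    (ω ω' : Fin N → Fin M → ℝ) (hagree : ∀ n (m : Fin M), m ≠ k → ω n m = ω' n m) :
    (∀ n, n ≤ N → bassX M N dt p q ω n i = bassX M N dt p q ω' n i) ∧
      bassG M N dt p q i ω = bassG M N dt p q i ω' := by
  have hlocal n := bassX_eq_of_not_influential (dt := dt) (p := p) hq hagree n i hki
  exact ⟨fun n _ => hlocal n, by rw [bassG, bassG, hlocal N]⟩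

/-- Locality of the discrete Bass realization: if `k` is not influential to `i`,
then the state of `i` does not depend on the coordinates of node `k`. -/
theorem bass_locality
    (M N : ℕ) (hM : 1 ≤ M) (hN : 1 ≤ N) (dt : ℝ) (hdt : 0 < dt)
    (p : Fin M → ℝ) (hp : ∀ j, 0 ≤ p j)
    (q : Fin M → Fin M → ℝ) (hq : ∀ k j, 0 ≤ q k j) (hqdiag : ∀ j, q j j = 0)
    (k i : Fin M) (hki : ¬ influential M q k i)
    (ω ω' : Fin N → Fin M → ℝ) (hagree : ∀ n (m : Fin M), m ≠ k → ω n m = ω' n m) :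
    (∀ n, n ≤ N → bassX M N dt p q ω n i = bassX M N dt p q ω' n i) ∧
      bassG M N dt p q i ω = bassG M N dt p q i ω' :=
  bass_locality_general M N dt p q hq k i hki ω ω' hagree
end

section
/- Equality case of the weighted Chebyshev integral inequality: let I = [a,b] ⊆ ℝ be an interval (infinite endpoints allowed), let f, g : I → ℝ be both non-decreasing or both non-increasing on I, and let w : I → ℝ be a positive measurable function with ∫_I w(x) dx = 1; assume f·w, g·w, f·g·w are Lebesgue integrable on I. Then ∫_I f g w dx = (∫_I f w dx)·(∫_I g w dx) if and only if f is constant almost everywhere on I or g is constant almost everywhere on I (with respect to Lebesgue measure on I). -/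
/-!
Since `f` and `g` vary together, the kernel `K x y = (f x - f y) (g x - g y) w x w y` is
nonnegative, and Fubini gives `∫∫ K = 2 (∫ w ∫ f g w - ∫ f w ∫ g w)`; so equality forces `K = 0`
a.e. If neither `f` nor `g` were a.e. constant, choose thresholds `p`, `q` splitting each of them
into two parts of positive measure. Again because `f` and `g` vary together, the lower parts
`{f ≤ p}`, `{g ≤ q}` are nested, as are the upper parts, so `{f ≤ p, g ≤ q}` and `{f > p, g > q}`
both have positive measure, and `K > 0` on their product.
-/

open MeasureTheory Set Filter

section Monovary
variable {α : Type*} {s : Set α} {f g : α → ℝ}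

theorem MonovaryOn.setOf_le_inter_subset_or (hfg : MonovaryOn f g s) (p q : ℝ) :
    {x | f x ≤ p} ∩ s ⊆ {x | g x ≤ q} ∨ {x | g x ≤ q} ∩ s ⊆ {x | f x ≤ p} := by
  by_contra! h
  obtain ⟨⟨x, ⟨hfx, hxs⟩, hgx⟩, ⟨y, ⟨hgy, hys⟩, hfy⟩⟩ := And.imp not_subset.1 not_subset.1 h
  simp only [mem_ofPred_eq, not_le] at hfx hgx hgy hfy
  linarith [hfg hys hxs (hgy.trans_lt hgx)]

theorem MonovaryOn.setOf_lt_inter_subset_or (hfg : MonovaryOn f g s) (p q : ℝ) :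
    {x | p < f x} ∩ s ⊆ {x | q < g x} ∨ {x | q < g x} ∩ s ⊆ {x | p < f x} := by
  by_contra! h
  obtain ⟨⟨x, ⟨hfx, hxs⟩, hgx⟩, ⟨y, ⟨hgy, hys⟩, hfy⟩⟩ := And.imp not_subset.1 not_subset.1 h
  simp only [mem_ofPred_eq, not_lt] at hfx hgx hgy hfy
  linarith [hfg hxs hys (hgx.trans_lt hgy)]

end Monovary

section
variable {α : Type*} [MeasurableSpace α] {ν : Measure α}

/-- Otherwise the thresholds `p` with `ν {f ≤ p} = 0` form a nonempty lower set, bounded above,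
whose supremum is an a.e. value of `f`. -/
theorem exists_measure_le_pos_and_measure_lt_pos {f : α → ℝ}
    (hf : ¬ ∃ c, ∀ᵐ x ∂ν, f x = c) :
    ∃ p, 0 < ν {x | f x ≤ p} ∧ 0 < ν {x | p < f x} := by
  by_contra! h
  have hν : ν ≠ 0 := by
    rintro rfl
    exact hf ⟨0, by simp⟩
  set T := {p : ℝ | ν {x | f x ≤ p} = 0}
  have hT_lower : ∀ ⦃p q : ℝ⦄, q ≤ p → p ∈ T → q ∈ T := fun p q hqp hp =>
    measure_mono_null (fun x hx => le_trans hx hqp) hp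
  obtain ⟨p₀, hp₀⟩ : ∃ n : ℕ, 0 < ν {x | f x ≤ n} :=
    exists_measure_pos_of_not_measure_iUnion_null (by
      have hcover : ⋃ n : ℕ, {x | f x ≤ n} = univ :=
        eq_univ_of_forall fun x => mem_iUnion.2 (exists_nat_ge (f x))
      rwa [hcover, Measure.measure_univ_ne_zero])
  obtain ⟨p₁, hp₁⟩ : ∃ n : ℕ, 0 < ν {x | -(n : ℝ) < f x} :=
    exists_measure_pos_of_not_measure_iUnion_null (by
      have hcover : ⋃ n : ℕ, {x | -(n : ℝ) < f x} = univ :=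
        eq_univ_of_forall fun x => mem_iUnion.2 ((exists_nat_gt (-f x)).imp fun _ => neg_lt.1)
      rwa [hcover, Measure.measure_univ_ne_zero])
  have hT_bdd : BddAbove T :=
    ⟨p₀, fun p hp => le_of_not_gt fun hlt => hp₀.ne' (hT_lower hlt.le hp)⟩
  have hT_ne : T.Nonempty :=
    ⟨-p₁, by_contra fun hne => hp₁.not_ge (h _ (pos_iff_ne_zero.2 hne))⟩
  refine hf ⟨sSup T, ?_⟩
  obtain ⟨u, -, hu, huT⟩ := exists_seq_tendsto_sSup hT_ne hT_bdd
  obtain ⟨v, -, hTv, hv⟩ := exists_seq_strictAnti_tendsto (sSup T)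
  have hlow : ∀ᵐ x ∂ν, sSup T ≤ f x := by
    refine ae_iff.2 (measure_mono_null (fun x hx => ?_) (measure_iUnion_null huT))
    obtain ⟨n, hn⟩ := (hu.eventually (lt_mem_nhds (not_le.1 hx))).exists
    exact mem_iUnion.2 ⟨n, hn.le⟩
  have hhigh : ∀ᵐ x ∂ν, f x ≤ sSup T := by
    refine ae_iff.2 (measure_mono_null (fun x hx => ?_) (measure_iUnion_null fun n =>
      nonpos_iff_eq_zero.1 (h _ (pos_iff_ne_zero.2 (notMem_of_csSup_lt (s := T) (hTv n) hT_bdd)))))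
    obtain ⟨n, hn⟩ := (hv.eventually (gt_mem_nhds (not_le.1 hx))).exists
    exact mem_iUnion.2 ⟨n, hn⟩
  filter_upwards [hlow, hhigh] with x h₁ h₂ using le_antisymm h₂ h₁

theorem measure_inter_pos_of_inter_subset_or {s A C : Set α} (hs : ∀ᵐ x ∂ν, x ∈ s)
    (hA : 0 < ν A) (hC : 0 < ν C) (hAC : A ∩ s ⊆ C ∨ C ∩ s ⊆ A) : 0 < ν (A ∩ C) := by
  have hs' : ν sᶜ = 0 := ae_iff.1 hs
  rcases hAC with h | h
  · rw [← measure_inter_conull hs'] at hA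
    exact hA.trans_le (measure_mono (subset_inter inter_subset_left h))
  · rw [← measure_inter_conull hs'] at hC
    exact hC.trans_le (measure_mono (subset_inter h inter_subset_left))

variable {f g w : α → ℝ}

theorem integral_mul_mul_eq_of_ae_eq_const {c : ℝ} (hf : ∀ᵐ x ∂ν, f x = c) :
    (∫ x, w x ∂ν) * (∫ x, f x * g x * w x ∂ν) = (∫ x, f x * w x ∂ν) * ∫ x, g x * w x ∂ν := by
  have hfw : ∫ x, f x * w x ∂ν = c * ∫ x, w x ∂ν := by
    rw [← integral_const_mul]
    exact integral_congr_ae (hf.mono fun x hx => by simp only [hx])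
  have hfgw : ∫ x, f x * g x * w x ∂ν = c * ∫ x, g x * w x ∂ν := by
    rw [← integral_const_mul]
    exact integral_congr_ae (hf.mono fun x hx => by simp only [hx, mul_assoc])
  rw [hfw, hfgw]
  ring

section Integrable
variable (hw : Integrable w ν) (hfw : Integrable (fun x => f x * w x) ν)
  (hgw : Integrable (fun x => g x * w x) ν) (hfgw : Integrable (fun x => f x * g x * w x) ν)
include hw hfw hgw hfgw

theorem integrable_prod_sub_mul_sub_mul_mul :
    Integrable (fun z : α × α => (f z.1 - f z.2) * (g z.1 - g z.2) * (w z.1 * w z.2))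
      (ν.prod ν) := by
  refine (((hfgw.mul_prod hw).add (hw.mul_prod hfgw)).sub
    ((hfw.mul_prod hgw).add (hgw.mul_prod hfw))).congr (Eventually.of_forall fun z => ?_)
  simp only [Pi.add_apply, Pi.sub_apply]
  ring

variable [SFinite ν]

theorem integral_prod_sub_mul_sub_mul_mul :
    ∫ z, (f z.1 - f z.2) * (g z.1 - g z.2) * (w z.1 * w z.2) ∂ν.prod ν =
      2 * ((∫ x, w x ∂ν) * (∫ x, f x * g x * w x ∂ν) -
        (∫ x, f x * w x ∂ν) * ∫ x, g x * w x ∂ν) := by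
  calc ∫ z, (f z.1 - f z.2) * (g z.1 - g z.2) * (w z.1 * w z.2) ∂ν.prod ν
      = ∫ z, ((f z.1 * g z.1 * w z.1) * w z.2 + w z.1 * (f z.2 * g z.2 * w z.2) -
          ((f z.1 * w z.1) * (g z.2 * w z.2) + (g z.1 * w z.1) * (f z.2 * w z.2))) ∂ν.prod ν := by
        congr 1; ext z; ring
    _ = _ := by
        rw [integral_sub, integral_add (hfgw.mul_prod hw) (hw.mul_prod hfgw),
          integral_add (hfw.mul_prod hgw) (hgw.mul_prod hfw),
          integral_prod_mul (fun x => f x * g x * w x) w,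
          integral_prod_mul w (fun x => f x * g x * w x),
          integral_prod_mul (fun x => f x * w x) (fun x => g x * w x),
          integral_prod_mul (fun x => g x * w x) (fun x => f x * w x)]
        · ring
        · exact (hfgw.mul_prod hw).add (hw.mul_prod hfgw)
        · exact (hfw.mul_prod hgw).add (hgw.mul_prod hfw)

theorem MonovaryOn.ae_eq_const_or_ae_eq_const_of_integral_eq {s : Set α}
    (hfg : MonovaryOn f g s) (hs : ∀ᵐ x ∂ν, x ∈ s) (hw_pos : ∀ x ∈ s, 0 < w x)
    (heq : (∫ x, w x ∂ν) * (∫ x, f x * g x * w x ∂ν) =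
      (∫ x, f x * w x ∂ν) * ∫ x, g x * w x ∂ν) :
    (∃ c, ∀ᵐ x ∂ν, f x = c) ∨ ∃ c, ∀ᵐ x ∂ν, g x = c := by
  by_contra hcon
  obtain ⟨hf, hg⟩ := not_or.1 hcon
  obtain ⟨p, hf_le, hf_lt⟩ := exists_measure_le_pos_and_measure_lt_pos hf
  obtain ⟨q, hg_le, hg_lt⟩ := exists_measure_le_pos_and_measure_lt_pos hg
  have hlow := measure_inter_pos_of_inter_subset_or hs hf_le hg_le
    (hfg.setOf_le_inter_subset_or p q)
  have hhigh := measure_inter_pos_of_inter_subset_or hs hf_lt hg_lt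
    (hfg.setOf_lt_inter_subset_or p q)
  have hs₁ : ∀ᵐ z ∂ν.prod ν, z.1 ∈ s := Measure.quasiMeasurePreserving_fst.ae hs
  have hs₂ : ∀ᵐ z ∂ν.prod ν, z.2 ∈ s := Measure.quasiMeasurePreserving_snd.ae hs
  have hkernel_nonneg : 0 ≤ᵐ[ν.prod ν]
      fun z => (f z.1 - f z.2) * (g z.1 - g z.2) * (w z.1 * w z.2) := by
    filter_upwards [hs₁, hs₂] with z h₁ h₂
    exact mul_nonneg (hfg.sub_mul_sub_nonneg h₂ h₁)
      (mul_pos (hw_pos _ h₁) (hw_pos _ h₂)).le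
  have hkernel_zero : ∀ᵐ z ∂ν.prod ν, (f z.1 - f z.2) * (g z.1 - g z.2) * (w z.1 * w z.2) = 0 :=
    (integral_eq_zero_iff_of_nonneg_ae hkernel_nonneg
      (integrable_prod_sub_mul_sub_mul_mul hw hfw hgw hfgw)).1
      (by rw [integral_prod_sub_mul_sub_mul_mul hw hfw hgw hfgw, heq, sub_self, mul_zero])
  have hnull : ν.prod ν
      (({x | p < f x} ∩ {x | q < g x}) ×ˢ ({x | f x ≤ p} ∩ {x | g x ≤ q})) = 0 := by
    refine measure_eq_zero_iff_ae_notMem.2 ?_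
    filter_upwards [hkernel_zero, hs₁, hs₂] with z hz h₁ h₂ ⟨⟨hpf, hqg⟩, hfp, hgq⟩
    refine hz.not_gt (mul_pos (mul_pos ?_ ?_) (mul_pos (hw_pos _ h₁) (hw_pos _ h₂)))
    · exact sub_pos.2 (lt_of_le_of_lt hfp hpf)
    · exact sub_pos.2 (lt_of_le_of_lt hgq hqg)
  rw [Measure.prod_prod] at hnull
  exact mul_ne_zero hhigh.ne' hlow.ne' hnull

end Integrable

variable [SFinite ν]

theorem MonovaryOn.integral_mul_mul_eq_iff {s : Set α} (hfg : MonovaryOn f g s)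
    (hs : ∀ᵐ x ∂ν, x ∈ s) (hw_pos : ∀ x ∈ s, 0 < w x) (hw : Integrable w ν)
    (hfw : Integrable (fun x => f x * w x) ν) (hgw : Integrable (fun x => g x * w x) ν)
    (hfgw : Integrable (fun x => f x * g x * w x) ν) :
    (∫ x, w x ∂ν) * (∫ x, f x * g x * w x ∂ν) = (∫ x, f x * w x ∂ν) * ∫ x, g x * w x ∂ν ↔
      (∃ c, ∀ᵐ x ∂ν, f x = c) ∨ ∃ c, ∀ᵐ x ∂ν, g x = c := by
  refine ⟨hfg.ae_eq_const_or_ae_eq_const_of_integral_eq hw hfw hgw hfgw hs hw_pos, ?_⟩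
  rintro (⟨c, hf⟩ | ⟨c, hg⟩)
  · exact integral_mul_mul_eq_of_ae_eq_const hf
  · simpa only [mul_comm (g _) (f _), mul_comm (∫ x, g x * w x ∂ν)] using
      integral_mul_mul_eq_of_ae_eq_const (g := f) (w := w) hg

end

theorem chebyshev_integral_equality_iff_general
    (a b : EReal) (I : Set ℝ) (hI : I = {x : ℝ | a ≤ (x : EReal) ∧ (x : EReal) ≤ b})
    (f g w : ℝ → ℝ)
    (hmono : (MonotoneOn f I ∧ MonotoneOn g I) ∨ (AntitoneOn f I ∧ AntitoneOn g I))
    (hw_pos : ∀ x ∈ I, 0 < w x)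
    (hw_one : ∫ x in I, w x = 1)
    (hfw : IntegrableOn (fun x => f x * w x) I)
    (hgw : IntegrableOn (fun x => g x * w x) I)
    (hfgw : IntegrableOn (fun x => f x * g x * w x) I) :
    (∫ x in I, f x * g x * w x) = (∫ x in I, f x * w x) * (∫ x in I, g x * w x) ↔
      ((∃ c : ℝ, ∀ᵐ x ∂(volume.restrict I), f x = c) ∨
        (∃ c : ℝ, ∀ᵐ x ∂(volume.restrict I), g x = c)) := by
  have hI_meas : MeasurableSet I :=
    hI ▸ (isClosed_Icc.preimage continuous_coe_real_ereal).measurableSet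
  have hfg : MonovaryOn f g I := hmono.elim (fun h => h.1.monovaryOn h.2)
    (fun h => h.1.monovaryOn h.2)
  have key := hfg.integral_mul_mul_eq_iff (ae_restrict_mem hI_meas) hw_pos
    (integrable_of_integral_eq_one hw_one) hfw hgw hfgw
  rwa [hw_one, one_mul] at key

/-- Equality case of the weighted Chebyshev integral inequality on an interval
`I = [a,b] ⊆ ℝ` (infinite endpoints allowed, encoded via `EReal` endpoints):
equality `∫_I f g w = (∫_I f w)·(∫_I g w)` holds if and only if `f` or `g` is
constant almost everywhere on `I` (w.r.t. Lebesgue measure on `I`). -/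
theorem chebyshev_integral_equality_iff
    (a b : EReal) (I : Set ℝ) (hI : I = {x : ℝ | a ≤ (x : EReal) ∧ (x : EReal) ≤ b})
    (f g w : ℝ → ℝ)
    (hmono : (MonotoneOn f I ∧ MonotoneOn g I) ∨ (AntitoneOn f I ∧ AntitoneOn g I))
    (hw_meas : Measurable w) (hw_pos : ∀ x ∈ I, 0 < w x)
    (hw_one : ∫ x in I, w x = 1)
    (hfw : IntegrableOn (fun x => f x * w x) I)
    (hgw : IntegrableOn (fun x => g x * w x) I)
    (hfgw : IntegrableOn (fun x => f x * g x * w x) I) :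
    (∫ x in I, f x * g x * w x) = (∫ x in I, f x * w x) * (∫ x in I, g x * w x) ↔
      ((∃ c : ℝ, ∀ᵐ x ∂(volume.restrict I), f x = c) ∨
        (∃ c : ℝ, ∀ᵐ x ∂(volume.restrict I), g x = c)) :=
  chebyshev_integral_equality_iff_general a b I hI f g w hmono hw_pos hw_one hfw hgw hfgw
end

section
/- A vertex cut is a funnel node: let V be a finite set of nodes partitioned into nonempty disjoint sets A, B and a singleton {j}, and let E be a directed edge relation on V. Let E^A be obtained from E by deleting every edge from a node of B into j (so edges into j come only from A), and let E^B be obtained from E by deleting every edge from a node of A into j. Suppose j is a vertex cut between A and B: there is no directed path in E avoiding j from any node of A to any node of B, and none from any node of B to any node of A. Then j is a funnel node of A and B: there is no node m ∈ A ∪ B such that there is a directed path from m to j in E^A and also a directed path from m to j in E^B. -/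
/-!
Follow a path from `m` to `j` up to its first visit of `j`: the prefix avoids `j` and ends at a
node `c` with an edge into `j`. In `E^A` such a `c` lies outside `B`, hence in `A`; in `E^B` it
lies in `B`. Whichever of `A`, `B` contains `m`, one of the two prefixes crosses the cut.
-/

namespace Relation.ReflTransGen

variable {V : Type*} {r : V → V → Prop} {j : V}

theorem exists_avoiding_to_pred (m : V) (h : ReflTransGen r m j) (hm : m ≠ j) :
    ∃ c, c ≠ j ∧ r c j ∧ ReflTransGen (fun k l => r k l ∧ k ≠ j ∧ l ≠ j) m c := by
  induction h using head_induction_on with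
  | refl => exact absurd rfl hm
  | @head m n hmn _ ih =>
    by_cases hn : n = j
    · exact ⟨m, hm, hn ▸ hmn, refl⟩
    · obtain ⟨c, hcj, hcr, hpath⟩ := ih hn
      exact ⟨c, hcj, hcr, head ⟨hmn, hm, hn⟩ hpath⟩

end Relation.ReflTransGen

section

open Relation

variable {V : Type*}

theorem exists_avoiding_path_to_entry_outside {E : V → V → Prop} {C : Set V} {j m : V}
    (h : ReflTransGen (fun k l => E k l ∧ ¬ (k ∈ C ∧ l = j)) m j) (hm : m ≠ j) :
    ∃ c ∉ C, c ≠ j ∧ ReflTransGen (fun k l => E k l ∧ k ≠ j ∧ l ≠ j) m c := by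
  obtain ⟨c, hcj, ⟨-, hcC⟩, hpath⟩ := h.exists_avoiding_to_pred m hm
  exact ⟨c, fun hc => hcC ⟨hc, rfl⟩, hcj,
    ReflTransGen.mono (fun _ _ ⟨⟨hE, _⟩, hk, hl⟩ => ⟨hE, hk, hl⟩) _ _ hpath⟩

theorem mem_left_of_union_union_singleton_eq_univ {A B : Set V} {j x : V}
    (hcover : A ∪ B ∪ {j} = Set.univ) (hxB : x ∉ B) (hxj : x ≠ j) : x ∈ A := by
  have hx : x ∈ A ∪ B ∪ {j} := hcover ▸ Set.mem_univ x
  rcases hx with (hxA | hxB') | hxj'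
  exacts [hxA, absurd hxB' hxB, absurd hxj' hxj]

end

theorem vertex_cut_is_funnel_node_general
    {V : Type*} (A B : Set V) (j : V) (E : V → V → Prop)
    (hjA : j ∉ A) (hjB : j ∉ B) (hcover : A ∪ B ∪ {j} = Set.univ)
    (hcut : ∀ a ∈ A, ∀ b ∈ B,
      ¬ Relation.ReflTransGen (fun k l => E k l ∧ k ≠ j ∧ l ≠ j) a b ∧
      ¬ Relation.ReflTransGen (fun k l => E k l ∧ k ≠ j ∧ l ≠ j) b a) :
    ¬ ∃ m ∈ A ∪ B,
        Relation.ReflTransGen (fun k l => E k l ∧ ¬ (k ∈ B ∧ l = j)) m j ∧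
        Relation.ReflTransGen (fun k l => E k l ∧ ¬ (k ∈ A ∧ l = j)) m j := by
  rintro ⟨m, hmA | hmB, hpathA, hpathB⟩
  · obtain ⟨b, hbA, hbj, hmb⟩ :=
      exists_avoiding_path_to_entry_outside hpathB (ne_of_mem_of_not_mem hmA hjA)
    have hbB : b ∈ B := mem_left_of_union_union_singleton_eq_univ
      (Set.union_comm A B ▸ hcover) hbA hbj
    exact (hcut m hmA b hbB).1 hmb
  · obtain ⟨a, haB, haj, hma⟩ :=
      exists_avoiding_path_to_entry_outside hpathA (ne_of_mem_of_not_mem hmB hjB)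
    exact (hcut a (mem_left_of_union_union_singleton_eq_univ hcover haB haj) m hmB).2 hma

/-- A vertex cut is a funnel node: if `{A, B, {j}}` partitions the finite node
set `V` and there is no directed path avoiding `j` from `A` to `B` nor from `B`
to `A`, then no node `m ∈ A ∪ B` has a directed path to `j` both in the network
`E^A` (edges from `B` into `j` deleted) and in the network `E^B` (edges from `A`
into `j` deleted). -/
theorem vertex_cut_is_funnel_node
    {V : Type*} [Fintype V] (A B : Set V) (j : V) (E : V → V → Prop)
    (hA : A.Nonempty) (hB : B.Nonempty) (hAB : Disjoint A B)
    (hjA : j ∉ A) (hjB : j ∉ B) (hcover : A ∪ B ∪ {j} = Set.univ)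
    (hcut : ∀ a ∈ A, ∀ b ∈ B,
      ¬ Relation.ReflTransGen (fun k l => E k l ∧ k ≠ j ∧ l ≠ j) a b ∧
      ¬ Relation.ReflTransGen (fun k l => E k l ∧ k ≠ j ∧ l ≠ j) b a) :
    ¬ ∃ m ∈ A ∪ B,
        Relation.ReflTransGen (fun k l => E k l ∧ ¬ (k ∈ B ∧ l = j)) m j ∧
        Relation.ReflTransGen (fun k l => E k l ∧ ¬ (k ∈ A ∧ l = j)) m j :=
  vertex_cut_is_funnel_node_general A B j E hjA hjB hcover hcut
end

section
/- Strict monotonicity of the circle adoption level in the number of nodes: let t, p, q > 0 and let M ≥ 1 be an integer with q ≠ j·p for every integer 1 ≤ j ≤ M. Then f_circle(t; p, q, M) < f_circle(t; p, q, M+1), equivalently S_circle(t; p, q, M) > S_circle(t; p, q, M+1). -/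
/-- The coefficient `c_{M−k}` of the explicit circle formula, as a function of
`k` (so `dcoef p q k = c_{M−k}`; this is independent of `M`), defined by the
backward recursion
`c_{M−k} = 1 − q^k/∏_{j=1}^{k}(q−jp) − Σ_{j=1}^{k−1} (p^{j−k}(−q)^{k−j}/(k−j)!)·c_{M−j}`. -/
noncomputable def dcoef (p q : ℝ) : ℕ → ℝ
  | k =>
    1 - q ^ k / (∏ j ∈ Finset.Icc 1 k, (q - (j : ℝ) * p)) -
      ∑ j ∈ (Finset.Ico 1 k).attach,
        (p ^ ((j.1 : ℤ) - (k : ℤ)) * (-q) ^ (k - j.1) / (Nat.factorial (k - j.1)) *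
          dcoef p q j.1)
  decreasing_by exact (Finset.mem_Ico.mp j.2).2

/-- Nonadoption probability of a node in the discrete Bass model on a one-sided
homogeneous circle with `M` nodes, external rate `p` and internal rate `q`:
`S_circle(t;p,q,M) = Σ_{k=1}^{M−1} c_k (−q)^{k−1}/(p^{k−1}(k−1)!) e^{(−kp−q)t}
                     + (−q)^{M−1}/∏_{j=1}^{M−1}(jp−q) · e^{−Mpt}`,
where `c_k = dcoef p q (M−k)`. -/
noncomputable def Scircle (t p q : ℝ) (M : ℕ) : ℝ :=
  (∑ k ∈ Finset.Icc 1 (M - 1),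
      dcoef p q (M - k) * ((-q) ^ (k - 1) / (p ^ (k - 1) * Nat.factorial (k - 1))) *
        Real.exp ((-(k : ℝ) * p - q) * t)) +
    ((-q) ^ (M - 1) / (∏ j ∈ Finset.Icc 1 (M - 1), ((j : ℝ) * p - q))) *
      Real.exp (-(M : ℝ) * p * t)

/-!
Put `G_m(t) := e^{(p+q)t} S_circle(t; p, q, m + 1)`. Writing `A_m = q^m / ∏_{i ≤ m} (q - i p)`,
the recursion defining the `c_k` says exactly that the coefficients of `G_m` convolved with the
exponential series of `-q/p` give `1 - A_m`; hence `G_m(0) = 1`, and together with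
`(q - m p) A_m = q A_{m-1}` it yields the triangular system `G'_{m+1} = q e^{-pt} G_m`.
Consequently `D_n(t) := e^{(p+q)t} (S_n(t) - S_{n+1}(t))` vanishes at `t = 0` and satisfies
`D'_{n+1} = q e^{-pt} D_n`, while `D_0(t) = e^{(p+q)t} (1 - e^{-pt}) > 0`;
by induction every `D_n` is increasing, hence positive, on `t > 0`.
-/

open Finset Real
open scoped Nat

namespace CircleBass

lemma hasDerivAt_exp_const_mul (c t : ℝ) :
    HasDerivAt (fun s => exp (c * s)) (exp (c * t) * c) t := by
  simpa using ((hasDerivAt_id t).const_mul c).exp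

lemma lt_of_hasDerivAt_pos {f f' : ℝ → ℝ} {a b : ℝ} (hf : ∀ x, HasDerivAt f (f' x) x)
    (hf' : ∀ x, a < x → 0 < f' x) (hab : a < b) : f a < f b := by
  have hmono : StrictMonoOn f (Set.Ici a) :=
    strictMonoOn_of_hasDerivWithinAt_pos (convex_Ici a)
      (fun x _ => (hf x).continuousAt.continuousWithinAt)
      (fun x _ => (hf x).hasDerivWithinAt)
      (fun x hx => hf' x (by rwa [interior_Ici] at hx))
  exact hmono Set.self_mem_Ici hab.le hab

noncomputable def circleRatio (p q : ℝ) (m : ℕ) : ℝ := q ^ m / ∏ i ∈ Icc 1 m, (q - i * p)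

noncomputable def expCoeff (x : ℝ) (j : ℕ) : ℝ := x ^ j / j !

/-- `G_m` of the header: a pair `(i, j)` of the antidiagonal stands for the index `k = j + 1` of
`Scircle t p q (m + 1)`, whose coefficient is `c_k = dcoef p q i`. -/
noncomputable def scaledScircle (p q : ℝ) (m : ℕ) (t : ℝ) : ℝ :=
  ∑ x ∈ antidiagonal m, dcoef p q x.1 * expCoeff (-q / p) x.2 * exp (-(x.2 * p) * t) +
    circleRatio p q m * exp ((q - m * p) * t)

variable {p q : ℝ}

@[simp]
lemma circleRatio_zero : circleRatio p q 0 = 1 := by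
  simp [circleRatio]

lemma sub_mul_circleRatio_succ {m : ℕ} (h : q ≠ (m + 1 : ℕ) * p) :
    (q - (m + 1 : ℕ) * p) * circleRatio p q (m + 1) = q * circleRatio p q m := by
  rw [circleRatio, circleRatio, prod_Icc_succ_top (by omega), pow_succ]
  have : q - (m + 1 : ℕ) * p ≠ 0 := sub_ne_zero.mpr h
  field_simp

lemma neg_pow_div_prod_eq_circleRatio (m : ℕ) :
    (-q) ^ m / ∏ j ∈ Icc 1 m, ((j : ℝ) * p - q) = circleRatio p q m := by
  have hflip : ∏ j ∈ Icc 1 m, ((j : ℝ) * p - q) = ∏ j ∈ Icc 1 m, -(q - j * p) :=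
    prod_congr rfl fun _ _ => by ring
  rw [hflip, prod_neg, Nat.card_Icc, Nat.add_sub_cancel, neg_pow, circleRatio]
  exact mul_div_mul_left _ _ (pow_ne_zero m (by norm_num))

@[simp]
lemma expCoeff_zero (x : ℝ) : expCoeff x 0 = 1 := by
  simp [expCoeff]

lemma succ_mul_expCoeff_succ (x : ℝ) (j : ℕ) :
    (j + 1 : ℕ) * expCoeff x (j + 1) = x * expCoeff x j := by
  rw [expCoeff, expCoeff, Nat.factorial_succ, pow_succ]
  push_cast
  field_simp

@[simp]
lemma dcoef_zero : dcoef p q 0 = 0 := by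
  rw [dcoef, show Ico 1 0 = ∅ from rfl]
  simp

lemma zpow_sub_mul_neg_pow_div_factorial (hp : p ≠ 0) {j k : ℕ} (hjk : j ≤ k) :
    p ^ ((j : ℤ) - k) * (-q) ^ (k - j) / (k - j)! = expCoeff (-q / p) (k - j) := by
  rw [show (j : ℤ) - k = -((k - j : ℕ) : ℤ) by push_cast [Nat.cast_sub hjk]; ring,
    zpow_neg, zpow_natCast, expCoeff, div_pow]
  field_simp

lemma dcoef_eq (hp : p ≠ 0) (k : ℕ) :
    dcoef p q k =
      1 - circleRatio p q k - ∑ j ∈ Ico 1 k, dcoef p q j * expCoeff (-q / p) (k - j) := by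
  rw [dcoef, circleRatio, sum_attach (Ico 1 k)
    (fun j => p ^ ((j : ℤ) - k) * (-q) ^ (k - j) / (k - j)! * dcoef p q j)]
  congr 1
  refine sum_congr rfl fun j hj => ?_
  rw [zpow_sub_mul_neg_pow_div_factorial hp (mem_Ico.mp hj).2.le, mul_comm]

lemma sum_antidiagonal_dcoef_mul_expCoeff (hp : p ≠ 0) (k : ℕ) :
    ∑ x ∈ antidiagonal k, dcoef p q x.1 * expCoeff (-q / p) x.2 = 1 - circleRatio p q k := by
  rw [Nat.sum_antidiagonal_eq_sum_range_succ (fun i j => dcoef p q i * expCoeff (-q / p) j),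
    sum_range_succ, Nat.sub_self, expCoeff_zero, mul_one]
  rcases Nat.eq_zero_or_pos k with rfl | hk
  · simp
  rw [range_eq_Ico, sum_eq_sum_Ico_succ_bot hk, dcoef_zero, zero_mul, zero_add, dcoef_eq hp k]
  ring

@[simp]
lemma Scircle_zero (t : ℝ) : Scircle t p q 0 = 1 := by
  simp [Scircle]

lemma Scircle_one (t : ℝ) : Scircle t p q 1 = exp (-(p * t)) := by
  simp [Scircle, neg_mul]

lemma Scircle_succ (t : ℝ) (m : ℕ) :
    Scircle t p q (m + 1) = exp (-((p + q) * t)) * scaledScircle p q m t := by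
  have hsum : ∑ k ∈ Icc 1 m,
        dcoef p q (m + 1 - k) * ((-q) ^ (k - 1) / (p ^ (k - 1) * (k - 1)!)) *
          exp ((-(k : ℝ) * p - q) * t) =
      exp (-((p + q) * t)) *
        ∑ x ∈ antidiagonal m, dcoef p q x.1 * expCoeff (-q / p) x.2 * exp (-(x.2 * p) * t) := by
    rw [← Ico_add_one_right_eq_Icc, sum_Ico_eq_sum_range, Nat.add_sub_cancel,
      ← Nat.sum_antidiagonal_swap, Nat.sum_antidiagonal_eq_sum_range_succ_mk, sum_range_succ,
      mul_add, mul_sum]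
    simp only [Prod.swap_prod_mk, Nat.sub_self, dcoef_zero, zero_mul, mul_zero, add_zero]
    refine sum_congr rfl fun j _ => ?_
    rw [show m + 1 - (1 + j) = m - j by omega, Nat.add_sub_cancel_left, expCoeff, div_pow,
      div_div, mul_left_comm (exp _), ← exp_add]
    push_cast
    ring_nf
  have hlast :
      exp (-((m + 1 : ℕ) : ℝ) * p * t) = exp (-((p + q) * t)) * exp ((q - m * p) * t) := by
    rw [← exp_add]
    push_cast
    ring_nf
  rw [Scircle, scaledScircle, Nat.add_sub_cancel, neg_pow_div_prod_eq_circleRatio, hsum, hlast]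
  ring

lemma scaledScircle_zero_right (hp : p ≠ 0) (m : ℕ) : scaledScircle p q m 0 = 1 := by
  simp only [scaledScircle, mul_zero, exp_zero, mul_one]
  rw [sum_antidiagonal_dcoef_mul_expCoeff hp]
  ring

lemma Scircle_zero_left (hp : p ≠ 0) (n : ℕ) : Scircle 0 p q n = 1 := by
  cases n with
  | zero => exact Scircle_zero 0
  | succ m => rw [Scircle_succ, scaledScircle_zero_right hp]; simp

lemma hasDerivAt_scaledScircle_succ (hp : p ≠ 0) {m : ℕ} (hq : q ≠ (m + 1 : ℕ) * p)
    (t : ℝ) :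
    HasDerivAt (scaledScircle p q (m + 1)) (q * exp (-p * t) * scaledScircle p q m t) t := by
  have hderiv : HasDerivAt (scaledScircle p q (m + 1)) _ t :=
    (HasDerivAt.fun_sum (u := antidiagonal (m + 1)) fun x _ =>
      (hasDerivAt_exp_const_mul (-(x.2 * p)) t).const_mul
        (dcoef p q x.1 * expCoeff (-q / p) x.2)).fun_add
      ((hasDerivAt_exp_const_mul (q - (m + 1 : ℕ) * p) t).const_mul (circleRatio p q (m + 1)))
  refine hderiv.congr_deriv ?_
  rw [Nat.sum_antidiagonal_succ', scaledScircle, mul_add, mul_sum]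
  simp only [Nat.cast_zero, zero_mul, neg_zero, mul_zero, zero_add]
  congr 1
  · refine sum_congr rfl fun x _ => ?_
    have hcoef : ((x.2 + 1 : ℕ) : ℝ) * p * expCoeff (-q / p) (x.2 + 1) =
        -q * expCoeff (-q / p) x.2 := by
      rw [mul_right_comm, succ_mul_expCoeff_succ]
      field_simp
    have hexp : exp (-((x.2 + 1 : ℕ) * p) * t) = exp (-p * t) * exp (-(x.2 * p) * t) := by
      rw [← exp_add]; push_cast; ring_nf
    rw [hexp]
    linear_combination (-(dcoef p q x.1 * exp (-p * t) * exp (-(x.2 * p) * t))) * hcoef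
  · have hexp : exp ((q - (m + 1 : ℕ) * p) * t) = exp (-p * t) * exp ((q - m * p) * t) := by
      rw [← exp_add]; push_cast; ring_nf
    rw [hexp]
    linear_combination (exp (-p * t) * exp ((q - m * p) * t)) * sub_mul_circleRatio_succ hq

lemma hasDerivAt_exp_mul_Scircle_succ (hp : p ≠ 0) {n : ℕ} (hn : n ≠ 0 → q ≠ n * p)
    (t : ℝ) :
    HasDerivAt (fun s => exp ((p + q) * s) * Scircle s p q (n + 1))
      (q * exp (q * t) * Scircle t p q n) t := by
  cases n with
  | zero =>
    have hscaled :
        (fun s => exp ((p + q) * s) * Scircle s p q (0 + 1)) = fun s => exp (q * s) := by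
      funext s
      rw [Scircle_one, ← exp_add]
      ring_nf
    rw [hscaled, Scircle_zero, mul_one, mul_comm]
    exact hasDerivAt_exp_const_mul q t
  | succ m =>
    have hscaled : (fun s => exp ((p + q) * s) * Scircle s p q (m + 1 + 1)) =
        scaledScircle p q (m + 1) := by
      funext s
      rw [Scircle_succ, ← mul_assoc, ← exp_add, add_neg_cancel, exp_zero, one_mul]
    rw [hscaled]
    refine (hasDerivAt_scaledScircle_succ hp (hn m.succ_ne_zero) t).congr_deriv ?_
    have hexp : exp (-p * t) = exp (q * t) * exp (-((p + q) * t)) := by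
      rw [← exp_add]
      ring_nf
    rw [Scircle_succ, hexp]
    ring

theorem Scircle_succ_lt (hp : 0 < p) (hq : 0 < q) {n : ℕ}
    (hnd : ∀ j : ℕ, 1 ≤ j → j ≤ n → q ≠ j * p) {t : ℝ} (ht : 0 < t) :
    Scircle t p q (n + 1) < Scircle t p q n := by
  induction n generalizing t with
  | zero =>
    rw [Scircle_one, Scircle_zero, exp_lt_one_iff, neg_lt_zero]
    exact mul_pos hp ht
  | succ n ih =>
    have hgap : ∀ s, HasDerivAt
        (fun s => exp ((p + q) * s) * Scircle s p q (n + 1) -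
          exp ((p + q) * s) * Scircle s p q (n + 1 + 1))
        (q * exp (q * s) * (Scircle s p q n - Scircle s p q (n + 1))) s := fun s =>
      ((hasDerivAt_exp_mul_Scircle_succ hp.ne'
          (fun hn => hnd n (Nat.one_le_iff_ne_zero.mpr hn) n.le_succ) s).sub
        (hasDerivAt_exp_mul_Scircle_succ hp.ne'
          (fun _ => hnd (n + 1) n.succ_pos le_rfl) s)).congr_deriv (by ring)
    have hpos := lt_of_hasDerivAt_pos hgap
      (fun s hs => mul_pos (mul_pos hq (exp_pos _))
        (sub_pos.mpr (ih (fun j hj hjn => hnd j hj (hjn.trans n.le_succ)) hs))) ht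
    rw [Scircle_zero_left hp.ne', Scircle_zero_left hp.ne', sub_self, sub_pos] at hpos
    exact lt_of_mul_lt_mul_left hpos (exp_pos _).le

end CircleBass

theorem Scircle_strict_anti_in_M_general (t p q : ℝ) (ht : 0 < t) (hp : 0 < p) (hq : 0 < q)
    (M : ℕ)
    (hnd : ∀ j : ℕ, 1 ≤ j → j ≤ M → q ≠ (j : ℝ) * p) :
    Scircle t p q M > Scircle t p q (M + 1) :=
  CircleBass.Scircle_succ_lt hp hq hnd ht

/-- Strict monotonicity of the circle adoption level in the number of nodes:
for `t, p, q > 0` and `M ≥ 1` with `q ≠ j·p` for `1 ≤ j ≤ M`,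
`S_circle(t;p,q,M) > S_circle(t;p,q,M+1)`, i.e.
`f_circle(t;p,q,M) < f_circle(t;p,q,M+1)`. -/
theorem Scircle_strict_anti_in_M (t p q : ℝ) (ht : 0 < t) (hp : 0 < p) (hq : 0 < q)
    (M : ℕ) (hM : 1 ≤ M)
    (hnd : ∀ j : ℕ, 1 ≤ j → j ≤ M → q ≠ (j : ℝ) * p) :
    Scircle t p q M > Scircle t p q (M + 1) :=
  Scircle_strict_anti_in_M_general t p q ht hp hq M hnd
end

section
/- The finite circle adoption level is strictly below the infinite-line adoption level: let p, q > 0 and let M ≥ 1 be an integer with q ≠ j·p for every integer 1 ≤ j ≤ M−1. Then for every t > 0, f_circle(t; p, q, M) < f_1D(t; p, q), equivalently S_circle(t; p, q, M) > S_1D(t; p, q). -/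
/-- Nonadoption probability of a node in the discrete Bass model on the
infinite line: `S_1D(t;p,q) = exp(−(p+q)t + q(1−e^{−pt})/p)`. -/
noncomputable def S1D (t p q : ℝ) : ℝ :=
  Real.exp (-(p + q) * t + q * (1 - Real.exp (-p * t)) / p)

/-!
Let `v_k(t)` (`circleBlock p q M k t`) be the probability that a fixed block of `k` consecutive
nodes of the circle has not adopted by time `t`, and `w_k(t)` (`lineBlock p q k t`) the same on
the infinite line. Such a block adopts externally at rate `k p` and through its left neighbour at
rate `q`, so both families solve `u_k' = -(k p + q) u_k + q u_{k+1}` with `u_k(0) = 1`. On the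
circle the chain closes at `v_M = e^{-M p t}`, since the whole circle has no outside neighbour,
and this exceeds `w_M`. With the integrating factor `e^{(k p + q) t}`, `w_{k+1} < v_{k+1}` forces
`w_k < v_k`; descending from `k = M` to `k = 1` gives the theorem, as `S_circle = v_1` and
`S_1D = w_1`.
-/

open Finset Real Nat

noncomputable section

def tailCoeff (p q : ℝ) (m : ℕ) : ℝ :=
  q ^ m / ∏ j ∈ Icc 1 m, (q - (j : ℝ) * p)

def taylorCoeff (p q : ℝ) (n : ℕ) : ℝ :=
  (-q) ^ n / (p ^ n * n !)

def circleBlock (p q : ℝ) (M k : ℕ) (t : ℝ) : ℝ :=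
  (∑ i ∈ Icc k (M - 1), dcoef p q (M - i) * taylorCoeff p q (i - k) * exp ((-(i : ℝ) * p - q) * t))
    + tailCoeff p q (M - k) * exp (-(M : ℝ) * p * t)

def lineBlock (p q : ℝ) (k : ℕ) (t : ℝ) : ℝ :=
  exp ((-(k : ℝ) * p - q) * t + q * (1 - exp (-p * t)) / p)

end

section Coefficients

variable (p q : ℝ)

lemma dcoef_eq (k : ℕ) :
    dcoef p q k = 1 - tailCoeff p q k -
      ∑ j ∈ Ico 1 k, p ^ ((j : ℤ) - k) * (-q) ^ (k - j) / (k - j)! * dcoef p q j := by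
  rw [dcoef, tailCoeff,
    sum_attach (Ico 1 k) fun j => p ^ ((j : ℤ) - k) * (-q) ^ (k - j) / (k - j)! * dcoef p q j]

lemma zpow_sub_mul_div_factorial_eq_taylorCoeff {j k : ℕ} (hjk : j ≤ k) :
    p ^ ((j : ℤ) - k) * (-q) ^ (k - j) / (k - j)! = taylorCoeff p q (k - j) := by
  rw [show (j : ℤ) - k = -((k - j : ℕ) : ℤ) by omega, zpow_neg, zpow_natCast, taylorCoeff]
  ring

lemma taylorCoeff_zero : taylorCoeff p q 0 = 1 := by
  simp [taylorCoeff]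

lemma taylorCoeff_succ {p : ℝ} (hp : p ≠ 0) (n : ℕ) :
    -((n + 1 : ℕ) * p) * taylorCoeff p q (n + 1) = q * taylorCoeff p q n := by
  rw [taylorCoeff, taylorCoeff, factorial_succ]
  push_cast
  field_simp
  ring

lemma tailCoeff_succ {m : ℕ} (hm : q ≠ (m + 1 : ℕ) * p) :
    (q - (m + 1 : ℕ) * p) * tailCoeff p q (m + 1) = q * tailCoeff p q m := by
  have htop : q - (m + 1 : ℕ) * p ≠ 0 := sub_ne_zero.mpr hm
  rw [tailCoeff, tailCoeff, prod_Icc_succ_top (by omega), pow_succ]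
  rcases eq_or_ne (∏ j ∈ Icc 1 m, (q - (j : ℝ) * p)) 0 with hP | hP
  · simp [hP]
  · field_simp

lemma neg_pow_div_prod_eq_tailCoeff (n : ℕ) :
    (-q) ^ n / ∏ j ∈ Icc 1 n, ((j : ℝ) * p - q) = tailCoeff p q n := by
  have hprod : ∏ j ∈ Icc 1 n, ((j : ℝ) * p - q) = (-1) ^ n * ∏ j ∈ Icc 1 n, (q - (j : ℝ) * p) := by
    simpa using prod_neg (s := Icc 1 n) fun j => q - (j : ℝ) * p
  rw [hprod, neg_pow, mul_div_mul_left _ _ (pow_ne_zero n (neg_ne_zero.mpr one_ne_zero)), tailCoeff]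

/-- The backward recursion defining `dcoef` is exactly what makes every `v_k(0)` equal to `1`. -/
lemma sum_dcoef_mul_taylorCoeff_add_tailCoeff (m : ℕ) :
    ∑ j ∈ Icc 1 m, dcoef p q j * taylorCoeff p q (m - j) + tailCoeff p q m = 1 := by
  rcases m with _ | m
  · simp [tailCoeff]
  have hsum : ∑ j ∈ Ico 1 (m + 1),
        p ^ ((j : ℤ) - (m + 1 : ℕ)) * (-q) ^ (m + 1 - j) / (m + 1 - j)! * dcoef p q j =
      ∑ j ∈ Icc 1 m, dcoef p q j * taylorCoeff p q (m + 1 - j) := by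
    rw [Ico_add_one_right_eq_Icc]
    refine sum_congr rfl fun j hj => ?_
    rw [zpow_sub_mul_div_factorial_eq_taylorCoeff p q (by grind), mul_comm]
  rw [sum_Icc_succ_top (by omega), dcoef_eq, hsum, Nat.sub_self, taylorCoeff_zero]
  ring

end Coefficients

section Dynamics

variable {p q : ℝ}

lemma hasDerivAt_exp_mul (c t : ℝ) : HasDerivAt (fun s => exp (c * s)) (c * exp (c * t)) t :=
  ((hasDerivAt_id' t).const_mul c).exp.congr_deriv (by ring)

lemma circleBlock_zero {M k : ℕ} (hM : 1 ≤ M) (hkM : k ≤ M) : circleBlock p q M k 0 = 1 := by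
  rw [← sum_dcoef_mul_taylorCoeff_add_tailCoeff p q (M - k), circleBlock]
  simp only [mul_zero, exp_zero, mul_one]
  congr 1
  refine sum_nbij' (M - ·) (M - ·) ?_ ?_ ?_ ?_ ?_ <;> intro i hi <;> simp only [mem_Icc] at hi ⊢
  all_goals first | omega | rw [show M - k - (M - i) = i - k by omega]

lemma circleBlock_self {M : ℕ} (hM : 1 ≤ M) (t : ℝ) :
    circleBlock p q M M t = exp (-(M : ℝ) * p * t) := by
  simp [circleBlock, Icc_eq_empty_of_lt (Nat.sub_lt hM one_pos), tailCoeff]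

lemma neg_mul_circleBlock_add_mul_circleBlock_succ (hp : p ≠ 0) {M k : ℕ} (hkM : k < M)
    (hq : q ≠ (M - k : ℕ) * p) (t : ℝ) :
    -((k : ℝ) * p + q) * circleBlock p q M k t + q * circleBlock p q M (k + 1) t =
      (∑ i ∈ Icc k (M - 1), dcoef p q (M - i) * taylorCoeff p q (i - k) *
          ((-(i : ℝ) * p - q) * exp ((-(i : ℝ) * p - q) * t))) +
        tailCoeff p q (M - k) * (-(M : ℝ) * p * exp (-(M : ℝ) * p * t)) := by
  obtain ⟨m, rfl⟩ : ∃ m, M = k + 1 + m := ⟨M - (k + 1), by omega⟩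
  have hMk : k + 1 + m - k = m + 1 := by omega
  rw [hMk] at hq ⊢
  have hterm : ∀ i ∈ Icc (k + 1) (k + 1 + m - 1),
      -((k : ℝ) * p + q) * (dcoef p q (k + 1 + m - i) * taylorCoeff p q (i - k) *
          exp ((-(i : ℝ) * p - q) * t)) +
        q * (dcoef p q (k + 1 + m - i) * taylorCoeff p q (i - (k + 1)) *
          exp ((-(i : ℝ) * p - q) * t)) =
      dcoef p q (k + 1 + m - i) * taylorCoeff p q (i - k) *
        ((-(i : ℝ) * p - q) * exp ((-(i : ℝ) * p - q) * t)) := by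
    intro i hi
    obtain ⟨n, rfl⟩ : ∃ n, i = k + 1 + n := ⟨i - (k + 1), by grind⟩
    rw [show k + 1 + n - k = n + 1 by omega, show k + 1 + n - (k + 1) = n by omega]
    have hstep := taylorCoeff_succ q hp n
    push_cast at hstep ⊢
    linear_combination -(dcoef p q (k + 1 + m - (k + 1 + n)) *
      exp ((-((k : ℝ) + 1 + n) * p - q) * t)) * hstep
  have hsum := sum_congr rfl hterm
  rw [sum_add_distrib, ← mul_sum, ← mul_sum] at hsum
  have hlead := tailCoeff_succ p q hq
  rw [circleBlock, circleBlock, ← insert_Icc_add_one_left_eq_Icc (by omega),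
    sum_insert (by simp), sum_insert (by simp), ← hsum, hMk, show k + 1 + m - (k + 1) = m by omega,
    Nat.sub_self, taylorCoeff_zero]
  push_cast at hlead ⊢
  linear_combination -exp (-((k : ℝ) + 1 + m) * p * t) * hlead

lemma hasDerivAt_circleBlock (hp : p ≠ 0) {M k : ℕ} (hkM : k < M) (hq : q ≠ (M - k : ℕ) * p)
    (t : ℝ) :
    HasDerivAt (circleBlock p q M k)
      (-((k : ℝ) * p + q) * circleBlock p q M k t + q * circleBlock p q M (k + 1) t) t := by
  rw [neg_mul_circleBlock_add_mul_circleBlock_succ hp hkM hq]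
  exact (HasDerivAt.fun_sum fun i _ => (hasDerivAt_exp_mul _ t).const_mul _).add
    ((hasDerivAt_exp_mul _ t).const_mul _)

lemma lineBlock_zero (k : ℕ) : lineBlock p q k 0 = 1 := by
  simp [lineBlock]

lemma lineBlock_succ (k : ℕ) (t : ℝ) :
    lineBlock p q (k + 1) t = exp (-p * t) * lineBlock p q k t := by
  rw [lineBlock, lineBlock, ← exp_add]
  push_cast
  ring_nf

lemma hasDerivAt_lineBlock (hp : p ≠ 0) (k : ℕ) (t : ℝ) :
    HasDerivAt (lineBlock p q k)
      (-((k : ℝ) * p + q) * lineBlock p q k t + q * lineBlock p q (k + 1) t) t := by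
  have hexponent : HasDerivAt (fun s => (-(k : ℝ) * p - q) * s + q * (1 - exp (-p * s)) / p)
      ((-(k : ℝ) * p - q) + q * exp (-p * t)) t := by
    have := (((hasDerivAt_id' t).const_mul (-(k : ℝ) * p - q)).add
      ((((hasDerivAt_exp_mul (-p) t).const_sub 1).const_mul q).div_const p))
    exact this.congr_deriv (by field_simp)
  rw [lineBlock_succ]
  exact hexponent.exp.congr_deriv (by rw [lineBlock]; ring)

lemma lineBlock_lt_exp (hp : 0 < p) (hq : 0 < q) (k : ℕ) {t : ℝ} (ht : 0 < t) :
    lineBlock p q k t < exp (-(k : ℝ) * p * t) := by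
  have hexp : 1 - exp (-p * t) < p * t := by
    linarith [add_one_lt_exp (x := -p * t) (by nlinarith)]
  have hshift : q * (1 - exp (-p * t)) / p < q * t := by
    rw [div_lt_iff₀ hp]
    nlinarith
  rw [lineBlock, exp_lt_exp]
  nlinarith

end Dynamics

/-- `e^{a s} (f s - g s)` starts at `0` and has positive derivative. -/
lemma lt_of_hasDerivAt_of_forcing_lt {a : ℝ} {f g F G : ℝ → ℝ}
    (hf : ∀ s, HasDerivAt f (-a * f s + F s) s) (hg : ∀ s, HasDerivAt g (-a * g s + G s) s)
    (h0 : g 0 = f 0) (hGF : ∀ s, 0 < s → G s < F s) {t : ℝ} (ht : 0 < t) : g t < f t := by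
  set h : ℝ → ℝ := fun s => exp (a * s) * (f s - g s)
  have hh (s : ℝ) : HasDerivAt h (exp (a * s) * (F s - G s)) s :=
    ((hasDerivAt_exp_mul a s).mul ((hf s).sub (hg s))).congr_deriv (by simp only [Pi.sub_apply]; ring)
  have hmono : StrictMonoOn h (Set.Ici 0) := by
    refine strictMonoOn_of_deriv_pos (convex_Ici 0)
      (fun s _ => (hh s).continuousAt.continuousWithinAt) fun s hs => ?_
    rw [interior_Ici] at hs
    rw [(hh s).deriv]
    exact mul_pos (exp_pos _) (sub_pos.mpr (hGF s hs))
  have hpos : h 0 < h t := hmono Set.self_mem_Ici ht.le ht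
  simp only [h, h0, sub_self, mul_zero] at hpos
  exact sub_pos.mp (pos_of_mul_pos_right hpos (exp_pos _).le)

theorem lineBlock_lt_circleBlock {p q : ℝ} (hp : 0 < p) (hq : 0 < q) {M : ℕ} (hM : 1 ≤ M)
    (hnd : ∀ j : ℕ, 1 ≤ j → j ≤ M - 1 → q ≠ (j : ℝ) * p) {k : ℕ} (hk : 1 ≤ k) (hkM : k ≤ M)
    {t : ℝ} (ht : 0 < t) : lineBlock p q k t < circleBlock p q M k t := by
  refine Nat.decreasingInduction' (P := fun j => ∀ t : ℝ, 0 < t →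
    lineBlock p q j t < circleBlock p q M j t) (fun j hjM hkj ih t ht => ?_) hkM (fun t ht => ?_) t ht
  · refine lt_of_hasDerivAt_of_forcing_lt (F := fun s => q * circleBlock p q M (j + 1) s)
      (G := fun s => q * lineBlock p q (j + 1) s)
      (hasDerivAt_circleBlock hp.ne' hjM (hnd _ (by omega) (by omega)))
      (hasDerivAt_lineBlock hp.ne' j) ?_ (fun s hs => mul_lt_mul_of_pos_left (ih s hs) hq) ht
    rw [lineBlock_zero, circleBlock_zero hM hjM.le]
  · rw [circleBlock_self hM]; exact lineBlock_lt_exp hp hq M ht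

lemma Scircle_eq_circleBlock (t p q : ℝ) (M : ℕ) : Scircle t p q M = circleBlock p q M 1 t := by
  rw [Scircle, circleBlock, neg_pow_div_prod_eq_tailCoeff]
  rfl

lemma S1D_eq_lineBlock (t p q : ℝ) : S1D t p q = lineBlock p q 1 t := by
  rw [S1D, lineBlock]
  push_cast
  ring_nf

/-- The finite circle adoption level is strictly below the infinite-line
adoption level: for `p, q > 0`, `M ≥ 1` with `q ≠ j·p` for `1 ≤ j ≤ M−1`, and
every `t > 0`, `S_circle(t;p,q,M) > S_1D(t;p,q)`, i.e.
`f_circle(t;p,q,M) < f_1D(t;p,q)`. -/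
theorem Scircle_gt_S1D (p q : ℝ) (hp : 0 < p) (hq : 0 < q)
    (M : ℕ) (hM : 1 ≤ M)
    (hnd : ∀ j : ℕ, 1 ≤ j → j ≤ M - 1 → q ≠ (j : ℝ) * p)
    (t : ℝ) (ht : 0 < t) :
    Scircle t p q M > S1D t p q := by
  rw [gt_iff_lt, S1D_eq_lineBlock, Scircle_eq_circleBlock]
  exact lineBlock_lt_circleBlock hp hq hM hnd le_rfl hM ht
end

section
/- Symmetric-pairs inequality for the bounded line: let p > 0, q^L, q^R > 0, set q := q^L + q^R, let M ≥ 2 be an integer, and assume q^L ≠ j·p, q^R ≠ j·p and q ≠ j·p for every integer 1 ≤ j ≤ M−1. Then for every integer 1 ≤ k ≤ M, writing k̃ := M+1−k, and for every t > 0: S_circle(t; p, q, k) + S_circle(t; p, q, k̃) > e^{pt} · ( S_circle(t; p, q^L, k) · S_circle(t; p, q^R, k̃) + S_circle(t; p, q^L, k̃) · S_circle(t; p, q^R, k) ). -/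
open Finset

lemma Scircle_zero (t p q : ℝ) : Scircle t p q 0 = 1 := by simp [Scircle]

lemma Scircle_one (t p q : ℝ) : Scircle t p q 1 = Real.exp (-(p * t)) := by simp [Scircle]

noncomputable def circleCoeff (p q : ℝ) (N i : ℕ) : ℝ :=
  dcoef p q (N - i) * ((-q) ^ i / (p ^ i * i.factorial))

noncomputable def circleTail (p q : ℝ) (N : ℕ) : ℝ :=
  (-q) ^ N / ∏ j ∈ Icc 1 N, ((j : ℝ) * p - q)

lemma sum_Icc_one_eq_sum_range {M : Type*} [AddCommMonoid M] (f : ℕ → M) (N : ℕ) :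
    ∑ k ∈ Icc 1 N, f k = ∑ i ∈ range N, f (i + 1) := by
  rw [range_eq_Ico, sum_Ico_add', ← Ico_add_one_right_eq_Icc]

lemma Scircle_succ_eq (t p q : ℝ) (N : ℕ) :
    Scircle t p q (N + 1) =
      ∑ i ∈ range N, circleCoeff p q N i * Real.exp ((-((i : ℝ) + 1) * p - q) * t) +
        circleTail p q N * Real.exp (-((N : ℝ) + 1) * p * t) := by
  simp only [Scircle, Nat.add_sub_cancel, sum_Icc_one_eq_sum_range, circleCoeff, circleTail,
    Nat.add_sub_add_right]
  push_cast
  rfl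

lemma circleTail_eq (p q : ℝ) (N : ℕ) :
    circleTail p q N = q ^ N / ∏ j ∈ Icc 1 N, (q - (j : ℝ) * p) := by
  have h : ∏ j ∈ Icc 1 N, ((j : ℝ) * p - q) = (-1) ^ N * ∏ j ∈ Icc 1 N, (q - (j : ℝ) * p) := by
    simp only [← neg_sub q, prod_neg, Nat.card_Icc, Nat.add_sub_cancel]
  rw [circleTail, h, neg_pow, mul_div_mul_left _ _ (pow_ne_zero _ (by norm_num))]

lemma dcoef_add_sum (p q : ℝ) (N : ℕ) :
    dcoef p q N + ∑ i ∈ Ico 1 N, circleCoeff p q N i = 1 - circleTail p q N := by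
  set g : ℕ → ℝ := fun j =>
    p ^ ((j : ℤ) - N) * (-q) ^ (N - j) / ((N - j).factorial) * dcoef p q j
  have hreflect : ∑ i ∈ Ico 1 N, circleCoeff p q N i = ∑ j ∈ Ico 1 N, g j := by
    have h := sum_Ico_reflect g 1 (Nat.le_succ N)
    rw [Nat.add_sub_cancel, Nat.add_sub_cancel_left] at h
    rw [← h]
    refine sum_congr rfl fun i hi => ?_
    obtain ⟨j, rfl⟩ : ∃ j, N = i + j := ⟨N - i, by grind⟩
    have hexp : (j : ℤ) - ((i + j : ℕ) : ℤ) = -(i : ℤ) := by push_cast; ring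
    simp only [circleCoeff, g, Nat.add_sub_cancel_left, Nat.add_sub_cancel, hexp, zpow_neg,
      zpow_natCast]
    ring
  rw [dcoef, circleTail_eq, sum_attach (Ico 1 N) g, hreflect]
  ring

lemma Scircle_at_zero (p q : ℝ) (N : ℕ) : Scircle 0 p q N = 1 := by
  rcases N with _ | N
  · simp [Scircle]
  rw [Scircle_succ_eq]
  simp only [mul_zero, Real.exp_zero, mul_one]
  rcases N with _ | N
  · simp [circleTail]
  rw [range_eq_Ico, sum_eq_sum_Ico_succ_bot (Nat.succ_pos N)]
  have h0 : circleCoeff p q (N + 1) 0 = dcoef p q (N + 1) := by simp [circleCoeff]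
  rw [h0, dcoef_add_sum]
  ring

lemma circleCoeff_succ_succ {p : ℝ} (hp : p ≠ 0) (q : ℝ) (N i : ℕ) :
    circleCoeff p q (N + 1) (i + 1) * (-(((i : ℝ) + 1) * p)) = q * circleCoeff p q N i := by
  simp only [circleCoeff, Nat.add_sub_add_right, Nat.factorial_succ, Nat.cast_mul, pow_succ]
  push_cast
  field_simp

lemma circleTail_succ (p q : ℝ) (N : ℕ) (hq : q ≠ ((N : ℝ) + 1) * p) :
    circleTail p q (N + 1) * (q - ((N : ℝ) + 1) * p) = q * circleTail p q N := by
  have hne : ((N : ℝ) + 1) * p - q ≠ 0 := sub_ne_zero.mpr hq.symm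
  rw [circleTail, circleTail, prod_Icc_succ_top (Nat.le_add_left 1 N), div_mul_eq_mul_div]
  push_cast
  rw [show (-q) ^ (N + 1) * (q - ((N : ℝ) + 1) * p) = q * (-q) ^ N * (((N : ℝ) + 1) * p - q) by
    ring, mul_div_mul_right _ _ hne, mul_div_assoc]

lemma hasDerivAt_const_mul_exp (a μ t : ℝ) :
    HasDerivAt (fun s => a * Real.exp (μ * s)) (a * μ * Real.exp (μ * t)) t := by
  simpa [mul_comm, mul_assoc] using (((hasDerivAt_id t).const_mul μ).exp).const_mul a

lemma Scircle_hasDerivAt {p q : ℝ} (hp : p ≠ 0) {N : ℕ} (hq : q ≠ N * p) (t : ℝ) :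
    HasDerivAt (fun s => Scircle s p q (N + 1))
      (-((p + q) * Scircle t p q (N + 1)) + q * Real.exp (-(p * t)) * Scircle t p q N) t := by
  rcases N with _ | N
  · simp only [zero_add, Scircle_one, Scircle_zero]
    convert (hasDerivAt_const_mul_exp 1 (-p) t) using 1 <;> simp only [one_mul, neg_mul]
    ring
  simp only [Scircle_succ_eq]
  set E : ℕ → ℝ := fun i => Real.exp ((-((i : ℝ) + 1) * p - q) * t)
  have hterm : ∀ i ∈ range N,
      circleCoeff p q (N + 1) (i + 1) * (-((i + 1 : ℕ) + 1 : ℝ) * p - q) * E (i + 1) =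
        -((p + q) * (circleCoeff p q (N + 1) (i + 1) * E (i + 1))) +
          q * Real.exp (-(p * t)) * (circleCoeff p q N i * E i) := fun i _ => by
    have hE : E (i + 1) = Real.exp (-(p * t)) * E i := by
      simp only [E, ← Real.exp_add]; push_cast; ring_nf
    rw [hE]; push_cast
    linear_combination (Real.exp (-(p * t)) * E i) * circleCoeff_succ_succ hp q N i
  have hexp : Real.exp (-((N + 1 : ℕ) + 1 : ℝ) * p * t) =
      Real.exp (-(p * t)) * Real.exp (-((N : ℝ) + 1) * p * t) := by
    rw [← Real.exp_add]; push_cast; ring_nf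
  have htail := circleTail_succ p q N (by exact_mod_cast hq)
  refine ((HasDerivAt.fun_sum fun i (_ : i ∈ range (N + 1)) =>
    hasDerivAt_const_mul_exp (circleCoeff p q (N + 1) i) (-((i : ℝ) + 1) * p - q) t).fun_add
    (hasDerivAt_const_mul_exp (circleTail p q (N + 1)) (-((N + 1 : ℕ) + 1 : ℝ) * p) t))
    |>.congr_deriv ?_
  -- the `i = 0` term has exponent `-(p + q)`, so it cancels against `-(p + q) * S`
  rw [sum_range_succ', sum_range_succ', sum_congr rfl hterm, sum_add_distrib, sum_neg_distrib,
    ← mul_sum, ← mul_sum, hexp]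
  simp only [E]
  push_cast
  linear_combination (Real.exp (-(p * t)) * Real.exp (-((N : ℝ) + 1) * p * t)) * htail

lemma pos_of_hasDerivAt_linear {c : ℝ} {F H : ℝ → ℝ}
    (hF : ∀ t, HasDerivAt F (-(c * F t) + H t) t) (hF0 : 0 ≤ F 0)
    (hH : ∀ t, 0 < t → 0 < H t) {t : ℝ} (ht : 0 < t) : 0 < F t := by
  set u : ℝ → ℝ := fun s => Real.exp (c * s) * F s
  have hu : ∀ s, HasDerivAt u (Real.exp (c * s) * H s) s := fun s => by
    have hexp : HasDerivAt (fun s => Real.exp (c * s)) (c * Real.exp (c * s)) s := by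
      simpa using hasDerivAt_const_mul_exp 1 c s
    exact (hexp.fun_mul (hF s)).congr_deriv (by ring)
  have hmono : StrictMonoOn u (Set.Ici 0) := by
    refine strictMonoOn_of_deriv_pos (convex_Ici 0)
      (fun s _ => (hu s).continuousAt.continuousWithinAt) fun s hs => ?_
    rw [interior_Ici] at hs
    rw [(hu s).deriv]
    exact mul_pos (Real.exp_pos _) (hH s hs)
  have hlt : F 0 < Real.exp (c * t) * F t := by
    simpa [u] using hmono Set.self_mem_Ici ht.le ht
  exact pos_of_mul_pos_right (hF0.trans_lt hlt) (Real.exp_pos _).le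

section Scircle

variable {p q : ℝ} {N m : ℕ} {t : ℝ}

lemma Scircle_hasDerivAt_of_le (hp : 0 < p) (hq : 0 < q)
    (hnd : ∀ j : ℕ, 1 ≤ j → j ≤ N → q ≠ j * p) (hm : m ≤ N) (t : ℝ) :
    HasDerivAt (fun s => Scircle s p q (m + 1))
      (-((p + q) * Scircle t p q (m + 1)) + q * Real.exp (-(p * t)) * Scircle t p q m) t := by
  refine Scircle_hasDerivAt hp.ne' ?_ t
  rcases m with _ | m
  · simpa using hq.ne'
  · exact hnd _ (Nat.le_add_left 1 m) hm

lemma Scircle_pos (hp : 0 < p) (hq : 0 < q) (hnd : ∀ j : ℕ, 1 ≤ j → j ≤ N → q ≠ j * p)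
    (hm : m ≤ N + 1) (ht : 0 < t) : 0 < Scircle t p q m := by
  induction m generalizing t with
  | zero => simp [Scircle_zero]
  | succ m ih =>
    refine pos_of_hasDerivAt_linear (Scircle_hasDerivAt_of_le hp hq hnd (by omega))
      (by simp [Scircle_at_zero]) (fun s hs => ?_) ht
    have := ih (by omega) hs
    positivity

lemma Scircle_succ_lt (hp : 0 < p) (hq : 0 < q) (hnd : ∀ j : ℕ, 1 ≤ j → j ≤ N → q ≠ j * p)
    (hm : m ≤ N) (ht : 0 < t) : Scircle t p q (m + 1) < Scircle t p q m := by
  induction m generalizing t with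
  | zero =>
    rw [Scircle_zero, Scircle_one, Real.exp_lt_one_iff, neg_lt_zero]
    exact mul_pos hp ht
  | succ m ih =>
    rw [← sub_pos]
    refine pos_of_hasDerivAt_linear (c := p + q)
      (H := fun s => q * Real.exp (-(p * s)) * (Scircle s p q m - Scircle s p q (m + 1)))
      (fun s => (Scircle_hasDerivAt_of_le hp hq hnd (by omega) s).fun_sub
        (Scircle_hasDerivAt_of_le hp hq hnd hm s) |>.congr_deriv (by ring))
      (by simp [Scircle_at_zero]) (fun s hs => ?_) ht
    have := sub_pos.mpr (ih (by omega) hs)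
    positivity

lemma Scircle_le_exp (hp : 0 < p) (hq : 0 < q) (hnd : ∀ j : ℕ, 1 ≤ j → j ≤ N → q ≠ j * p)
    (hm1 : 1 ≤ m) (hm : m ≤ N + 1) (ht : 0 < t) : Scircle t p q m ≤ Real.exp (-(p * t)) := by
  induction m, hm1 using Nat.le_induction with
  | base => rw [Scircle_one]
  | succ m hm1 ih =>
    exact (Scircle_succ_lt hp hq hnd (by omega) ht).le.trans (ih (by omega))

end Scircle

lemma exp_mul_exp_neg (x : ℝ) : Real.exp x * Real.exp (-x) = 1 := by
  rw [← Real.exp_add, add_neg_cancel, Real.exp_zero]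

noncomputable def pairGap (p qL qR : ℝ) (m n : ℕ) (t : ℝ) : ℝ :=
  Scircle t p (qL + qR) m + Scircle t p (qL + qR) n -
    Real.exp (p * t) * (Scircle t p qL m * Scircle t p qR n + Scircle t p qL n * Scircle t p qR m)

noncomputable def pairForcing (p qL qR : ℝ) (a b : ℕ) (t : ℝ) : ℝ :=
  qL * (Real.exp (-(p * t)) * (Scircle t p (qL + qR) a + Scircle t p (qL + qR) b) -
      (Scircle t p qL a * Scircle t p qR (b + 1) + Scircle t p qL b * Scircle t p qR (a + 1))) +
    qR * (Real.exp (-(p * t)) * (Scircle t p (qL + qR) a + Scircle t p (qL + qR) b) -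
      (Scircle t p qL (a + 1) * Scircle t p qR b + Scircle t p qL (b + 1) * Scircle t p qR a))

lemma pairGap_comm (p qL qR : ℝ) (m n : ℕ) (t : ℝ) :
    pairGap p qL qR m n t = pairGap p qL qR n m t := by
  unfold pairGap; ring

lemma pairGap_at_zero (p qL qR : ℝ) (m n : ℕ) : pairGap p qL qR m n 0 = 0 := by
  simp [pairGap, Scircle_at_zero]

lemma pairGap_one_one (p qL qR t : ℝ) : pairGap p qL qR 1 1 t = 0 := by
  simp only [pairGap, Scircle_one]
  linear_combination (-2 * Real.exp (-(p * t))) * exp_mul_exp_neg (p * t)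

lemma pairForcing_eq_mul_pairGap_add (p qL qR : ℝ) (a b : ℕ) (t : ℝ) :
    pairForcing p qL qR a b t =
      (qL + qR) * Real.exp (-(p * t)) * pairGap p qL qR a b t +
        qL * (Scircle t p qL a * (Scircle t p qR b - Scircle t p qR (b + 1)) +
          Scircle t p qL b * (Scircle t p qR a - Scircle t p qR (a + 1))) +
        qR * (Scircle t p qR b * (Scircle t p qL a - Scircle t p qL (a + 1)) +
          Scircle t p qR a * (Scircle t p qL b - Scircle t p qL (b + 1))) := by
  unfold pairForcing pairGap
  linear_combination (qL + qR) * (Scircle t p qL a * Scircle t p qR b +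
    Scircle t p qL b * Scircle t p qR a) * exp_mul_exp_neg (p * t)

lemma pairForcing_zero_eq_mul_pairGap_add (p qL qR : ℝ) (b : ℕ) (t : ℝ) :
    pairForcing p qL qR 0 b t =
      (qL + qR) * Real.exp (-(p * t)) * pairGap p qL qR 1 b t +
        qL * ((1 - Real.exp (-(p * t))) * (Real.exp (-(p * t)) - Scircle t p qR b) +
          (Scircle t p qR b - Scircle t p qR (b + 1))) +
        qR * ((1 - Real.exp (-(p * t))) * (Real.exp (-(p * t)) - Scircle t p qL b) +
          (Scircle t p qL b - Scircle t p qL (b + 1))) := by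
  simp only [pairForcing, pairGap, Scircle_zero, Scircle_one, zero_add]
  linear_combination (qL + qR) * Real.exp (-(p * t)) * (Scircle t p qL b + Scircle t p qR b) *
    exp_mul_exp_neg (p * t)

section pairGap

variable {p qL qR : ℝ} {N a b : ℕ} {t : ℝ}

lemma pairGap_hasDerivAt (hp : 0 < p) (hqL : 0 < qL) (hqR : 0 < qR)
    (hndL : ∀ j : ℕ, 1 ≤ j → j ≤ N → qL ≠ j * p) (hndR : ∀ j : ℕ, 1 ≤ j → j ≤ N → qR ≠ j * p)
    (hndS : ∀ j : ℕ, 1 ≤ j → j ≤ N → qL + qR ≠ j * p)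
    (ha : a ≤ N) (hb : b ≤ N) (t : ℝ) :
    HasDerivAt (pairGap p qL qR (a + 1) (b + 1))
      (-((p + (qL + qR)) * pairGap p qL qR (a + 1) (b + 1) t) + pairForcing p qL qR a b t) t := by
  have hS := fun m (hm : m ≤ N) => Scircle_hasDerivAt_of_le hp (add_pos hqL hqR) hndS hm
  have hL := fun m (hm : m ≤ N) => Scircle_hasDerivAt_of_le hp hqL hndL hm
  have hR := fun m (hm : m ≤ N) => Scircle_hasDerivAt_of_le hp hqR hndR hm
  have hexp : HasDerivAt (fun s => Real.exp (p * s)) (p * Real.exp (p * t)) t := by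
    simpa using hasDerivAt_const_mul_exp 1 p t
  refine (((hS a ha t).fun_add (hS b hb t)).fun_sub (hexp.fun_mul
    (((hL a ha t).fun_mul (hR b hb t)).fun_add ((hL b hb t).fun_mul (hR a ha t))))).congr_deriv ?_
  unfold pairGap pairForcing
  linear_combination -(qL * (Scircle t p qL a * Scircle t p qR (b + 1) +
      Scircle t p qL b * Scircle t p qR (a + 1)) +
    qR * (Scircle t p qL (a + 1) * Scircle t p qR b +
      Scircle t p qL (b + 1) * Scircle t p qR a)) * exp_mul_exp_neg (p * t)

lemma pairForcing_pos (hp : 0 < p) (hqL : 0 < qL) (hqR : 0 < qR)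
    (hndL : ∀ j : ℕ, 1 ≤ j → j ≤ N → qL ≠ j * p) (hndR : ∀ j : ℕ, 1 ≤ j → j ≤ N → qR ≠ j * p)
    (hab : a ≤ b) (hb : b ≤ N) (hgap : 0 ≤ pairGap p qL qR a b t) (ht : 0 < t) :
    0 < pairForcing p qL qR a b t := by
  have hAa := Scircle_pos hp hqL hndL (m := a) (by omega) ht
  have hAb := Scircle_pos hp hqL hndL (m := b) (by omega) ht
  have hBa := Scircle_pos hp hqR hndR (m := a) (by omega) ht
  have hBb := Scircle_pos hp hqR hndR (m := b) (by omega) ht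
  have dAa := sub_pos.mpr (Scircle_succ_lt hp hqL hndL (hab.trans hb) ht)
  have dAb := sub_pos.mpr (Scircle_succ_lt hp hqL hndL hb ht)
  have dBa := sub_pos.mpr (Scircle_succ_lt hp hqR hndR (hab.trans hb) ht)
  have dBb := sub_pos.mpr (Scircle_succ_lt hp hqR hndR hb ht)
  have hgap' := mul_nonneg (mul_pos (add_pos hqL hqR) (Real.exp_pos (-(p * t)))).le hgap
  rw [pairForcing_eq_mul_pairGap_add]
  have := mul_pos hqL (add_pos (mul_pos hAa dBb) (mul_pos hAb dBa))
  have := mul_pos hqR (add_pos (mul_pos hBb dAa) (mul_pos hBa dAb))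
  linarith

lemma pairForcing_zero_pos (hp : 0 < p) (hqL : 0 < qL) (hqR : 0 < qR)
    (hndL : ∀ j : ℕ, 1 ≤ j → j ≤ N → qL ≠ j * p) (hndR : ∀ j : ℕ, 1 ≤ j → j ≤ N → qR ≠ j * p)
    (hb1 : 1 ≤ b) (hb : b ≤ N) (hgap : 0 ≤ pairGap p qL qR 1 b t) (ht : 0 < t) :
    0 < pairForcing p qL qR 0 b t := by
  have he : 0 ≤ 1 - Real.exp (-(p * t)) :=
    sub_nonneg.mpr (Real.exp_le_one_iff.mpr (by nlinarith))
  have eA := sub_nonneg.mpr (Scircle_le_exp hp hqL hndL hb1 (by omega) ht)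
  have eB := sub_nonneg.mpr (Scircle_le_exp hp hqR hndR hb1 (by omega) ht)
  have dA := sub_pos.mpr (Scircle_succ_lt hp hqL hndL hb ht)
  have dB := sub_pos.mpr (Scircle_succ_lt hp hqR hndR hb ht)
  have hgap' := mul_nonneg (mul_pos (add_pos hqL hqR) (Real.exp_pos (-(p * t)))).le hgap
  rw [pairForcing_zero_eq_mul_pairGap_add]
  have := mul_pos hqL (add_pos_of_nonneg_of_pos (mul_nonneg he eB) dB)
  have := mul_pos hqR (add_pos_of_nonneg_of_pos (mul_nonneg he eA) dA)
  linarith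

lemma pairGap_pos (hp : 0 < p) (hqL : 0 < qL) (hqR : 0 < qR)
    (hndL : ∀ j : ℕ, 1 ≤ j → j ≤ N → qL ≠ j * p) (hndR : ∀ j : ℕ, 1 ≤ j → j ≤ N → qR ≠ j * p)
    (hndS : ∀ j : ℕ, 1 ≤ j → j ≤ N → qL + qR ≠ j * p)
    {m n : ℕ} (hm : 1 ≤ m) (hmn : m ≤ n) (hn : 2 ≤ n) (hnN : n ≤ N + 1) (ht : 0 < t) :
    0 < pairGap p qL qR m n t := by
  induction n generalizing m t with
  | zero => omega
  | succ b ih =>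
    obtain ⟨a, rfl⟩ : ∃ a, m = a + 1 := ⟨m - 1, by omega⟩
    have hgap : ∀ m, 1 ≤ m → m ≤ b → ∀ s, 0 < s → 0 ≤ pairGap p qL qR m b s := by
      intro m hm hmb s hs
      rcases Nat.lt_or_ge b 2 with hb | hb
      · obtain ⟨rfl, rfl⟩ : m = 1 ∧ b = 1 := by omega
        exact (pairGap_one_one p qL qR s).ge
      · exact (ih hm hmb hb (by omega) hs).le
    refine pos_of_hasDerivAt_linear
      (pairGap_hasDerivAt hp hqL hqR hndL hndR hndS (by omega) (by omega))
      (pairGap_at_zero p qL qR _ _).ge (fun s hs => ?_) ht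
    rcases Nat.eq_zero_or_pos a with rfl | ha
    · exact pairForcing_zero_pos hp hqL hqR hndL hndR (by omega) (by omega)
        (hgap 1 le_rfl (by omega) s hs) hs
    · exact pairForcing_pos hp hqL hqR hndL hndR (by omega) (by omega)
        (hgap a ha (by omega) s hs) hs

end pairGap

/-- Symmetric-pairs inequality for the bounded line: for `p > 0`,
`q^L, q^R > 0`, `q := q^L + q^R`, `M ≥ 2`, under the nondegeneracy conditions,
for every `1 ≤ k ≤ M` with `k̃ := M+1−k` and every `t > 0`,
`S_circle(t;p,q,k) + S_circle(t;p,q,k̃) >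
  e^{pt}·(S_circle(t;p,q^L,k)·S_circle(t;p,q^R,k̃)
          + S_circle(t;p,q^L,k̃)·S_circle(t;p,q^R,k))`. -/
theorem Scircle_symmetric_pairs (p qL qR : ℝ) (hp : 0 < p) (hqL : 0 < qL) (hqR : 0 < qR)
    (M : ℕ) (hM : 2 ≤ M)
    (hnd : ∀ j : ℕ, 1 ≤ j → j ≤ M - 1 →
      qL ≠ (j : ℝ) * p ∧ qR ≠ (j : ℝ) * p ∧ qL + qR ≠ (j : ℝ) * p)
    (k : ℕ) (hk1 : 1 ≤ k) (hkM : k ≤ M)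
    (t : ℝ) (ht : 0 < t) :
    Scircle t p (qL + qR) k + Scircle t p (qL + qR) (M + 1 - k) >
      Real.exp (p * t) *
        (Scircle t p qL k * Scircle t p qR (M + 1 - k) +
          Scircle t p qL (M + 1 - k) * Scircle t p qR k) := by
  have hgap : ∀ m n, 1 ≤ m → m ≤ n → 2 ≤ n → n ≤ M - 1 + 1 → 0 < pairGap p qL qR m n t :=
    fun m n hm hmn hn hnN => pairGap_pos hp hqL hqR (fun j h1 h2 => (hnd j h1 h2).1)
      (fun j h1 h2 => (hnd j h1 h2).2.1) (fun j h1 h2 => (hnd j h1 h2).2.2) hm hmn hn hnN ht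
  have key : 0 < pairGap p qL qR k (M + 1 - k) t := by
    rcases le_total k (M + 1 - k) with h | h
    · exact hgap _ _ hk1 h (by omega) (by omega)
    · rw [pairGap_comm]
      exact hgap _ _ (by omega) h (by omega) (by omega)
  rwa [pairGap, sub_pos] at key
end
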